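/- arXiv:math/0404345 — 5 statements merged into one kernel-verified Lean document; each statement's English description precedes it below -/
import Mathlib

section
/- For every t ∈ ℝ and every 1 ≤ j ≤ l, the leading principal minors of the matrix exponential satisfy the bilinear identity D_j(t)·D_j″(t) − (D_j′(t))² = a_j⁰ · D_{j+1}(t) · D_{j−1}(t). -/
/-- The tridiagonal Lax matrix of the Toda lattice of type `A_l`: superdiagonal
entries `1`, subdiagonal entries `a₁,…,a_l`, and diagonal
`(b₁, b₂−b₁, …, b_l−b_{l−1}, −b_l)` (here `a i = a_{i+1}`, `b i = b_{i+1}`). -/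
def laxA (l : ℕ) (a b : Fin l → ℝ) : Matrix (Fin (l + 1)) (Fin (l + 1)) ℝ :=
  Matrix.of fun i j =>
    if (j : ℕ) = (i : ℕ) + 1 then 1
    else if h : (i : ℕ) = (j : ℕ) + 1 then a ⟨(j : ℕ), by have := i.isLt; omega⟩
    else if i = j then
      (if h1 : (i : ℕ) < l then b ⟨(i : ℕ), h1⟩ else 0) -
        (if h2 : 0 < (i : ℕ) then b ⟨(i : ℕ) - 1, by have := i.isLt; omega⟩ else 0)
    else 0

/-- `pminor M k`: the `k`-th leading principal minor of a square matrix, i.e. the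
determinant of its top-left `k×k` block (`1` for `k = 0`, and junk value `0` if `k`
exceeds the size). -/
noncomputable def pminor {n : ℕ} (M : Matrix (Fin n) (Fin n) ℝ) (k : ℕ) : ℝ :=
  if h : k ≤ n then
    (M.submatrix (fun i : Fin k => Fin.castLE h i) (fun j : Fin k => Fin.castLE h j)).det
  else 0

/-- `DfunA l a b j t = D_j(exp(t L⁰))`, the `j`-th leading principal minor of the
matrix exponential of `t` times the type-`A_l` Lax matrix. -/
noncomputable def DfunA (l : ℕ) (a b : Fin l → ℝ) (j : ℕ) (t : ℝ) : ℝ :=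
  pminor (NormedSpace.exp (t • laxA l a b)) j


open Matrix Finset NormedSpace Polynomial

theorem hasDerivAt_det_col {m : ℕ} {M : ℝ → Matrix (Fin m) (Fin m) ℝ}
    {M' : Matrix (Fin m) (Fin m) ℝ} {t : ℝ}
    (h : ∀ i j, HasDerivAt (fun s => M s i j) (M' i j) t) :
    HasDerivAt (fun s => (M s).det)
      (∑ c : Fin m, ((M t).updateCol c (fun r => M' r c)).det) t := by
  have key : ∀ σ : Equiv.Perm (Fin m),
      HasDerivAt (fun s => (Equiv.Perm.sign σ : ℝ) * ∏ i, M s (σ i) i)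
        (∑ c, (Equiv.Perm.sign σ : ℝ) * ((∏ i ∈ univ.erase c, M t (σ i) i) * M' (σ c) c)) t := by
    intro σ
    have hp : HasDerivAt (fun s => ∏ i, M s (σ i) i)
        (∑ c, (∏ i ∈ univ.erase c, M t (σ i) i) • M' (σ c) c) t :=
      HasDerivAt.fun_finsetProd (fun i _ => h (σ i) i)
    simpa [smul_eq_mul, Finset.mul_sum] using hp.const_mul ((Equiv.Perm.sign σ : ℝ))
  have total := HasDerivAt.fun_sum (fun σ (_ : σ ∈ (univ : Finset (Equiv.Perm (Fin m)))) => key σ)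
  have e1 : (fun s => ∑ σ : Equiv.Perm (Fin m), (Equiv.Perm.sign σ : ℝ) * ∏ i, M s (σ i) i)
      = fun s => (M s).det := by
    funext s; rw [Matrix.det_apply']
  rw [e1] at total
  have e2 : (∑ σ : Equiv.Perm (Fin m), ∑ c : Fin m,
        (Equiv.Perm.sign σ : ℝ) * ((∏ i ∈ univ.erase c, M t (σ i) i) * M' (σ c) c))
      = ∑ c : Fin m, ((M t).updateCol c (fun r => M' r c)).det := by
    rw [Finset.sum_comm]
    refine Finset.sum_congr rfl fun c _ => ?_
    rw [Matrix.det_apply']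
    refine Finset.sum_congr rfl fun σ _ => ?_
    congr 1
    rw [← Finset.mul_prod_erase univ _ (Finset.mem_univ c)]
    rw [Matrix.updateCol_apply, if_pos rfl]
    rw [mul_comm]
    congr 1
    refine Finset.prod_congr rfl fun i hi => ?_
    rw [Matrix.updateCol_apply, if_neg (Finset.ne_of_mem_erase hi)]
  rwa [e2] at total

def tri (l : ℕ) (s d u : ℕ → ℝ) : Matrix (Fin (l+1)) (Fin (l+1)) ℝ :=
  Matrix.of fun i j =>
    (if (j : ℕ) = (i : ℕ) + 1 then u (i : ℕ) else 0) +
    (if (i : ℕ) = (j : ℕ) + 1 then s (j : ℕ) else 0) +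
    (if (i : ℕ) = (j : ℕ) then d (i : ℕ) else 0)

theorem mul_tri_apply {l : ℕ} (s d u : ℕ → ℝ) (X : Matrix (Fin (l+1)) (Fin (l+1)) ℝ)
    (p q : Fin (l+1)) :
    (X * tri l s d u) p q =
      (if 1 ≤ (q : ℕ) then u ((q : ℕ) - 1) * X p ⟨(q : ℕ) - 1, by have := q.isLt; omega⟩ else 0)
      + d (q : ℕ) * X p q
      + (if h : (q : ℕ) < l then s (q : ℕ) * X p ⟨(q : ℕ) + 1, by omega⟩ else 0) := by
  rw [Matrix.mul_apply]
  have expand : ∀ k : Fin (l+1), X p k * tri l s d u k q =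
      (if (q : ℕ) = (k : ℕ) + 1 then u (k : ℕ) * X p k else 0)
      + (if (k : ℕ) = (q : ℕ) + 1 then s (q : ℕ) * X p k else 0)
      + (if (k : ℕ) = (q : ℕ) then d (k : ℕ) * X p k else 0) := by
    intro k
    simp only [tri, Matrix.of_apply]
    split_ifs <;> ring
  rw [Finset.sum_congr rfl (fun k _ => expand k), Finset.sum_add_distrib, Finset.sum_add_distrib]
  have h1 : (∑ k : Fin (l+1), if (q : ℕ) = (k : ℕ) + 1 then u (k : ℕ) * X p k else 0)
      = if 1 ≤ (q : ℕ) then u ((q : ℕ) - 1) * X p ⟨(q : ℕ) - 1, by have := q.isLt; omega⟩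
        else 0 := by
    by_cases hq : 1 ≤ (q : ℕ)
    · rw [if_pos hq, Finset.sum_eq_single (⟨(q : ℕ) - 1, by have := q.isLt; omega⟩ : Fin (l+1))]
      · rw [if_pos (by simp; omega)]
      · intro k _ hk
        rw [if_neg]
        intro hc
        exact hk (Fin.ext (by simp; omega))
      · simp
    · rw [if_neg hq]
      exact Finset.sum_eq_zero fun k _ => if_neg (by omega)
  have h2 : (∑ k : Fin (l+1), if (k : ℕ) = (q : ℕ) + 1 then s (q : ℕ) * X p k else 0)
      = if h : (q : ℕ) < l then s (q : ℕ) * X p ⟨(q : ℕ) + 1, by omega⟩ else 0 := by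
    by_cases hq : (q : ℕ) < l
    · rw [dif_pos hq, Finset.sum_eq_single (⟨(q : ℕ) + 1, by omega⟩ : Fin (l+1))]
      · rw [if_pos (by simp)]
      · intro k _ hk
        rw [if_neg]
        intro hc
        exact hk (Fin.ext (by simp; omega))
      · simp
    · rw [dif_neg hq]
      refine Finset.sum_eq_zero fun k _ => if_neg ?_
      have := k.isLt; omega
  have h3 : (∑ k : Fin (l+1), if (k : ℕ) = (q : ℕ) then d (k : ℕ) * X p k else 0)
      = d (q : ℕ) * X p q := by
    rw [Finset.sum_eq_single q]
    · rw [if_pos rfl]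
    · intro k _ hk
      exact if_neg fun hc => hk (Fin.ext hc)
    · simp
  rw [h1, h2, h3]; ring

theorem tri_mul_apply {l : ℕ} (s d u : ℕ → ℝ) (X : Matrix (Fin (l+1)) (Fin (l+1)) ℝ)
    (p q : Fin (l+1)) :
    (tri l s d u * X) p q =
      (if 1 ≤ (p : ℕ) then s ((p : ℕ) - 1) * X ⟨(p : ℕ) - 1, by have := p.isLt; omega⟩ q else 0)
      + d (p : ℕ) * X p q
      + (if h : (p : ℕ) < l then u (p : ℕ) * X ⟨(p : ℕ) + 1, by omega⟩ q else 0) := by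
  rw [Matrix.mul_apply]
  have expand : ∀ k : Fin (l+1), tri l s d u p k * X k q =
      (if (p : ℕ) = (k : ℕ) + 1 then s (k : ℕ) * X k q else 0)
      + (if (k : ℕ) = (p : ℕ) + 1 then u (p : ℕ) * X k q else 0)
      + (if (p : ℕ) = (k : ℕ) then d (p : ℕ) * X k q else 0) := by
    intro k
    simp only [tri, Matrix.of_apply]
    split_ifs <;> ring
  rw [Finset.sum_congr rfl (fun k _ => expand k), Finset.sum_add_distrib, Finset.sum_add_distrib]
  have h1 : (∑ k : Fin (l+1), if (p : ℕ) = (k : ℕ) + 1 then s (k : ℕ) * X k q else 0)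
      = if 1 ≤ (p : ℕ) then s ((p : ℕ) - 1) * X ⟨(p : ℕ) - 1, by have := p.isLt; omega⟩ q
        else 0 := by
    by_cases hp : 1 ≤ (p : ℕ)
    · rw [if_pos hp, Finset.sum_eq_single (⟨(p : ℕ) - 1, by have := p.isLt; omega⟩ : Fin (l+1))]
      · rw [if_pos (by simp; omega)]
      · intro k _ hk
        rw [if_neg]
        intro hc
        exact hk (Fin.ext (by simp; omega))
      · simp
    · rw [if_neg hp]
      exact Finset.sum_eq_zero fun k _ => if_neg (by omega)
  have h2 : (∑ k : Fin (l+1), if (k : ℕ) = (p : ℕ) + 1 then u (p : ℕ) * X k q else 0)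
      = if h : (p : ℕ) < l then u (p : ℕ) * X ⟨(p : ℕ) + 1, by omega⟩ q else 0 := by
    by_cases hp : (p : ℕ) < l
    · rw [dif_pos hp, Finset.sum_eq_single (⟨(p : ℕ) + 1, by omega⟩ : Fin (l+1))]
      · rw [if_pos (by simp)]
      · intro k _ hk
        rw [if_neg]
        intro hc
        exact hk (Fin.ext (by simp; omega))
      · simp
    · rw [dif_neg hp]
      refine Finset.sum_eq_zero fun k _ => if_neg ?_
      have := k.isLt; omega
  have h3 : (∑ k : Fin (l+1), if (p : ℕ) = (k : ℕ) then d (p : ℕ) * X k q else 0)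
      = d (p : ℕ) * X p q := by
    rw [Finset.sum_eq_single p]
    · rw [if_pos rfl]
    · intro k _ hk
      exact if_neg fun hc => hk (Fin.ext hc.symm)
    · simp
  rw [h1, h2, h3]; ring
theorem hasDerivAt_det_row {m : ℕ} {M : ℝ → Matrix (Fin m) (Fin m) ℝ}
    {M' : Matrix (Fin m) (Fin m) ℝ} {t : ℝ}
    (h : ∀ i j, HasDerivAt (fun s => M s i j) (M' i j) t) :
    HasDerivAt (fun s => (M s).det)
      (∑ r : Fin m, ((M t).updateRow r (fun c => M' r c)).det) t := by
  have hT := hasDerivAt_det_col (M := fun s => (M s)ᵀ) (M' := M'ᵀ) (t := t) (fun i j => h j i)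
  simp only [Matrix.det_transpose] at hT
  convert hT using 1
  refine Finset.sum_congr rfl fun r _ => ?_
  rw [← Matrix.det_transpose]
  congr 1
  rw [Matrix.updateCol_transpose]
  rfl

def entryLM (n : ℕ) (i k : Fin n) : Matrix (Fin n) (Fin n) ℝ →ₗ[ℝ] ℝ :=
  { toFun := fun M => M i k, map_add' := by intros; rfl, map_smul' := by intros; rfl }

theorem entry_hasDerivAt (n : ℕ) (A : Matrix (Fin n) (Fin n) ℝ) (t : ℝ) (i k : Fin n) :
    HasDerivAt (fun t : ℝ => exp (t • A) i k) ((exp (t • A) * A) i k) t := by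
  letI : NormedRing (Matrix (Fin n) (Fin n) ℝ) := Matrix.linftyOpNormedRing
  letI : NormedAlgebra ℝ (Matrix (Fin n) (Fin n) ℝ) := Matrix.linftyOpNormedAlgebra
  have h := hasDerivAt_exp_smul_const (𝕂 := ℝ) A t
  exact (LinearMap.toContinuousLinearMap (entryLM n i k)).hasFDerivAt.comp_hasDerivAt t h

theorem entry_hasDerivAt' (n : ℕ) (A : Matrix (Fin n) (Fin n) ℝ) (t : ℝ) (i k : Fin n) :
    HasDerivAt (fun t : ℝ => exp (t • A) i k) ((A * exp (t • A)) i k) t := by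
  letI : NormedRing (Matrix (Fin n) (Fin n) ℝ) := Matrix.linftyOpNormedRing
  letI : NormedAlgebra ℝ (Matrix (Fin n) (Fin n) ℝ) := Matrix.linftyOpNormedAlgebra
  have h := hasDerivAt_exp_smul_const' (𝕂 := ℝ) A t
  exact (LinearMap.toContinuousLinearMap (entryLM n i k)).hasFDerivAt.comp_hasDerivAt t h

/-- the inclusion of the first `m` indices -/
def ρf (l m : ℕ) (hm : m ≤ l) : Fin m → Fin (l+1) := fun c => ⟨c, by have := c.isLt; omega⟩
/-- the first `m-1` indices followed by index `m` -/
def γf (l m : ℕ) (hm : m ≤ l) : Fin m → Fin (l+1) :=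
  fun c => if (c : ℕ) + 1 = m then ⟨m, by omega⟩ else ⟨c, by have := c.isLt; omega⟩

theorem upd_sub_col {l m : ℕ} (X : Matrix (Fin (l+1)) (Fin (l+1)) ℝ)
    (θ γ : Fin m → Fin (l+1)) (c : Fin m) (p : Fin (l+1)) :
    (X.submatrix θ γ).updateCol c (fun r => X (θ r) p)
      = X.submatrix θ (Function.update γ c p) := by
  ext i j
  by_cases hj : j = c <;>
    simp [Matrix.updateCol_apply, Function.update_apply, hj]

theorem upd_sub_row {l m : ℕ} (X : Matrix (Fin (l+1)) (Fin (l+1)) ℝ)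
    (θ γ : Fin m → Fin (l+1)) (r : Fin m) (p : Fin (l+1)) :
    (X.submatrix θ γ).updateRow r (fun cc => X p (γ cc))
      = X.submatrix (Function.update θ r p) γ := by
  ext i j
  by_cases hi : i = r <;>
    simp [Matrix.updateRow_apply, Function.update_apply, hi]

theorem update_ρf_self {l m : ℕ} (hm : m ≤ l) (c : Fin m) :
    Function.update (ρf l m hm) c (ρf l m hm c) = ρf l m hm :=
  Function.update_eq_self _ _

theorem update_ρf_last {l m : ℕ} (hm : m ≤ l) (c : Fin m) (hc : (c : ℕ) + 1 = m) :
    Function.update (ρf l m hm) c ⟨(c : ℕ) + 1, by omega⟩ = γf l m hm := by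
  funext x
  rcases eq_or_ne x c with h | h
  · subst h
    rw [Function.update_self, γf, if_pos hc]
    exact Fin.ext (by simp [hc])
  · rw [Function.update_of_ne h, γf, if_neg, ρf]
    have : (x : ℕ) ≠ (c : ℕ) := fun hh => h (Fin.ext hh)
    omega


theorem fin_mk_ne {m : ℕ} (a : ℕ) (h : a < m) (c : Fin m) (hne : a ≠ (c : ℕ)) :
    (⟨a, h⟩ : Fin m) ≠ c := fun hh => hne (congrArg Fin.val hh)

/-- Column-version key lemma. -/
theorem keyCol {l m : ℕ} (s d u : ℕ → ℝ) (hm : m ≤ l) (hm1 : 1 ≤ m)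
    (θ : Fin m → Fin (l+1)) (t : ℝ) :
    HasDerivAt
      (fun t => ((exp (t • tri l s d u)).submatrix θ (ρf l m hm)).det)
      ((∑ c : Fin m, d (c : ℕ)) *
          ((exp (t • tri l s d u)).submatrix θ (ρf l m hm)).det
        + s (m - 1) * ((exp (t • tri l s d u)).submatrix θ (γf l m hm)).det) t := by
  set T := tri l s d u with hT
  set F : ℝ → Matrix (Fin (l+1)) (Fin (l+1)) ℝ := fun t => exp (t • T) with hF
  have hder : ∀ i j : Fin m, HasDerivAt (fun tt => (F tt).submatrix θ (ρf l m hm) i j)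
      (((F t * T).submatrix θ (ρf l m hm)) i j) t := fun i j =>
    entry_hasDerivAt (l+1) T t (θ i) (ρf l m hm j)
  have H := hasDerivAt_det_col (M := fun tt => (F tt).submatrix θ (ρf l m hm))
    (M' := (F t * T).submatrix θ (ρf l m hm)) (t := t) hder
  have Heq : (∑ c : Fin m, (((F t).submatrix θ (ρf l m hm)).updateCol c
        (fun r => ((F t * T).submatrix θ (ρf l m hm)) r c)).det)
      = (∑ c : Fin m, d (c : ℕ)) * ((F t).submatrix θ (ρf l m hm)).det
        + s (m - 1) * ((F t).submatrix θ (γf l m hm)).det := by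
    have percol : ∀ c : Fin m,
        (((F t).submatrix θ (ρf l m hm)).updateCol c
          (fun r => ((F t * T).submatrix θ (ρf l m hm)) r c)).det
        = d (c : ℕ) * ((F t).submatrix θ (ρf l m hm)).det
          + (if (c : ℕ) + 1 = m then s (m - 1) * ((F t).submatrix θ (γf l m hm)).det
             else 0) := by
      intro c
      have hcm := c.isLt
      have hcl : (c : ℕ) < l := lt_of_lt_of_le c.isLt hm
      have colsplit : (fun r => ((F t * T).submatrix θ (ρf l m hm)) r c)
          = ((fun r => if 1 ≤ (c : ℕ) then
                u ((c : ℕ) - 1) * F t (θ r) ⟨(c : ℕ) - 1, by omega⟩ else 0)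
            + fun r => d (c : ℕ) * F t (θ r) (ρf l m hm c))
            + fun r => s (c : ℕ) * F t (θ r) ⟨(c : ℕ) + 1, by omega⟩ := by
        funext r
        show (F t * T) (θ r) (ρf l m hm c) = _
        rw [mul_tri_apply, dif_pos (show ((ρf l m hm c : Fin (l+1)) : ℕ) < l from hcl)]
        rfl
      rw [colsplit, Matrix.det_updateCol_add, Matrix.det_updateCol_add]
      have term1 : (((F t).submatrix θ (ρf l m hm)).updateCol c
          (fun r => if 1 ≤ (c : ℕ) then
            u ((c : ℕ) - 1) * F t (θ r) ⟨(c : ℕ) - 1, by omega⟩ else 0)).det = 0 := by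
        by_cases h1 : 1 ≤ (c : ℕ)
        · simp only [if_pos h1]
          have hsm : (fun r => u ((c : ℕ) - 1) * F t (θ r) ⟨(c : ℕ) - 1, by omega⟩)
              = u ((c : ℕ) - 1) • (fun r => F t (θ r) ⟨(c : ℕ) - 1, by omega⟩) := rfl
          rw [hsm, Matrix.det_updateCol_smul,
            upd_sub_col (F t) θ (ρf l m hm) c ⟨(c : ℕ) - 1, by omega⟩]
          have hne : (⟨(c : ℕ) - 1, by omega⟩ : Fin m) ≠ c :=
            fin_mk_ne _ (by omega) c (by omega)
          have hzero : ((F t).submatrix θ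
              (Function.update (ρf l m hm) c ⟨(c : ℕ) - 1, by omega⟩)).det = 0 := by
            apply Matrix.det_zero_of_column_eq hne
            intro k
            show F t (θ k) (Function.update (ρf l m hm) c _ _)
              = F t (θ k) (Function.update (ρf l m hm) c _ c)
            rw [Function.update_self, Function.update_of_ne hne]
            rfl
          rw [hzero, mul_zero]
        · simp only [if_neg h1]
          apply Matrix.det_eq_zero_of_column_eq_zero c
          intro i
          rw [Matrix.updateCol_self]
      have term2 : (((F t).submatrix θ (ρf l m hm)).updateCol c
          (fun r => d (c : ℕ) * F t (θ r) (ρf l m hm c))).det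
          = d (c : ℕ) * ((F t).submatrix θ (ρf l m hm)).det := by
        have hsm : (fun r => d (c : ℕ) * F t (θ r) (ρf l m hm c))
            = d (c : ℕ) • (fun r => F t (θ r) (ρf l m hm c)) := rfl
        rw [hsm, Matrix.det_updateCol_smul,
          upd_sub_col (F t) θ (ρf l m hm) c (ρf l m hm c), update_ρf_self]
      have term3 : (((F t).submatrix θ (ρf l m hm)).updateCol c
          (fun r => s (c : ℕ) * F t (θ r) ⟨(c : ℕ) + 1, by omega⟩)).det
          = if (c : ℕ) + 1 = m then s (m - 1) * ((F t).submatrix θ (γf l m hm)).det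
            else 0 := by
        have hsm : (fun r => s (c : ℕ) * F t (θ r) ⟨(c : ℕ) + 1, by omega⟩)
            = s (c : ℕ) • (fun r => F t (θ r) ⟨(c : ℕ) + 1, by omega⟩) := rfl
        rw [hsm, Matrix.det_updateCol_smul,
          upd_sub_col (F t) θ (ρf l m hm) c ⟨(c : ℕ) + 1, by omega⟩]
        by_cases h3 : (c : ℕ) + 1 = m
        · rw [if_pos h3, update_ρf_last hm c h3]
          congr 2
          omega
        · rw [if_neg h3]
          have hne : (⟨(c : ℕ) + 1, by omega⟩ : Fin m) ≠ c :=
            fin_mk_ne _ (by omega) c (by omega)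
          have hzero : ((F t).submatrix θ
              (Function.update (ρf l m hm) c ⟨(c : ℕ) + 1, by omega⟩)).det = 0 := by
            apply Matrix.det_zero_of_column_eq hne
            intro k
            show F t (θ k) (Function.update (ρf l m hm) c _ _)
              = F t (θ k) (Function.update (ρf l m hm) c _ c)
            rw [Function.update_self, Function.update_of_ne hne]
            rfl
          rw [hzero, mul_zero]
      rw [term1, term2, term3, zero_add]
    rw [Finset.sum_congr rfl (fun c _ => percol c), Finset.sum_add_distrib, ← Finset.sum_mul]
    congr 1
    rw [Finset.sum_eq_single (⟨m - 1, by omega⟩ : Fin m)]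
    · rw [if_pos (show (m - 1) + 1 = m by omega)]
    · intro k _ hk
      rw [if_neg]
      intro hc
      exact hk (Fin.ext (show (k : ℕ) = m - 1 by omega))
    · simp
  rw [Heq] at H
  exact H

/-- Row-version key lemma. -/
theorem keyRow {l m : ℕ} (s d u : ℕ → ℝ) (hm : m ≤ l) (hm1 : 1 ≤ m)
    (θ : Fin m → Fin (l+1)) (t : ℝ) :
    HasDerivAt
      (fun t => ((exp (t • tri l s d u)).submatrix (ρf l m hm) θ).det)
      ((∑ c : Fin m, d (c : ℕ)) *
          ((exp (t • tri l s d u)).submatrix (ρf l m hm) θ).det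
        + u (m - 1) * ((exp (t • tri l s d u)).submatrix (γf l m hm) θ).det) t := by
  set T := tri l s d u with hT
  set F : ℝ → Matrix (Fin (l+1)) (Fin (l+1)) ℝ := fun t => exp (t • T) with hF
  have hder : ∀ i j : Fin m, HasDerivAt (fun tt => (F tt).submatrix (ρf l m hm) θ i j)
      (((T * F t).submatrix (ρf l m hm) θ) i j) t := fun i j =>
    entry_hasDerivAt' (l+1) T t (ρf l m hm i) (θ j)
  have H := hasDerivAt_det_row (M := fun tt => (F tt).submatrix (ρf l m hm) θ)
    (M' := (T * F t).submatrix (ρf l m hm) θ) (t := t) hder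
  have Heq : (∑ r : Fin m, (((F t).submatrix (ρf l m hm) θ).updateRow r
        (fun cc => ((T * F t).submatrix (ρf l m hm) θ) r cc)).det)
      = (∑ c : Fin m, d (c : ℕ)) * ((F t).submatrix (ρf l m hm) θ).det
        + u (m - 1) * ((F t).submatrix (γf l m hm) θ).det := by
    have perrow : ∀ c : Fin m,
        (((F t).submatrix (ρf l m hm) θ).updateRow c
          (fun cc => ((T * F t).submatrix (ρf l m hm) θ) c cc)).det
        = d (c : ℕ) * ((F t).submatrix (ρf l m hm) θ).det
          + (if (c : ℕ) + 1 = m then u (m - 1) * ((F t).submatrix (γf l m hm) θ).det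
             else 0) := by
      intro c
      have hcm := c.isLt
      have hcl : (c : ℕ) < l := lt_of_lt_of_le c.isLt hm
      have rowsplit : (fun cc => ((T * F t).submatrix (ρf l m hm) θ) c cc)
          = ((fun cc => if 1 ≤ (c : ℕ) then
                s ((c : ℕ) - 1) * F t ⟨(c : ℕ) - 1, by omega⟩ (θ cc) else 0)
            + fun cc => d (c : ℕ) * F t (ρf l m hm c) (θ cc))
            + fun cc => u (c : ℕ) * F t ⟨(c : ℕ) + 1, by omega⟩ (θ cc) := by
        funext r
        show (T * F t) (ρf l m hm c) (θ r) = _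
        rw [tri_mul_apply, dif_pos (show ((ρf l m hm c : Fin (l+1)) : ℕ) < l from hcl)]
        rfl
      rw [rowsplit, Matrix.det_updateRow_add, Matrix.det_updateRow_add]
      have term1 : (((F t).submatrix (ρf l m hm) θ).updateRow c
          (fun cc => if 1 ≤ (c : ℕ) then
            s ((c : ℕ) - 1) * F t ⟨(c : ℕ) - 1, by omega⟩ (θ cc) else 0)).det = 0 := by
        by_cases h1 : 1 ≤ (c : ℕ)
        · simp only [if_pos h1]
          have hsm : (fun cc => s ((c : ℕ) - 1) * F t ⟨(c : ℕ) - 1, by omega⟩ (θ cc))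
              = s ((c : ℕ) - 1) • (fun cc => F t ⟨(c : ℕ) - 1, by omega⟩ (θ cc)) := rfl
          rw [hsm, Matrix.det_updateRow_smul,
            upd_sub_row (F t) (ρf l m hm) θ c ⟨(c : ℕ) - 1, by omega⟩]
          have hne : (⟨(c : ℕ) - 1, by omega⟩ : Fin m) ≠ c :=
            fin_mk_ne _ (by omega) c (by omega)
          have hzero : ((F t).submatrix
              (Function.update (ρf l m hm) c ⟨(c : ℕ) - 1, by omega⟩) θ).det = 0 := by
            apply Matrix.det_zero_of_row_eq hne
            funext k
            show F t (Function.update (ρf l m hm) c _ _) (θ k)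
              = F t (Function.update (ρf l m hm) c _ c) (θ k)
            rw [Function.update_self, Function.update_of_ne hne]
            rfl
          rw [hzero, mul_zero]
        · simp only [if_neg h1]
          apply Matrix.det_eq_zero_of_row_eq_zero c
          intro i
          rw [Matrix.updateRow_self]
      have term2 : (((F t).submatrix (ρf l m hm) θ).updateRow c
          (fun cc => d (c : ℕ) * F t (ρf l m hm c) (θ cc))).det
          = d (c : ℕ) * ((F t).submatrix (ρf l m hm) θ).det := by
        have hsm : (fun cc => d (c : ℕ) * F t (ρf l m hm c) (θ cc))
            = d (c : ℕ) • (fun cc => F t (ρf l m hm c) (θ cc)) := rfl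
        rw [hsm, Matrix.det_updateRow_smul,
          upd_sub_row (F t) (ρf l m hm) θ c (ρf l m hm c), update_ρf_self]
      have term3 : (((F t).submatrix (ρf l m hm) θ).updateRow c
          (fun cc => u (c : ℕ) * F t ⟨(c : ℕ) + 1, by omega⟩ (θ cc))).det
          = if (c : ℕ) + 1 = m then u (m - 1) * ((F t).submatrix (γf l m hm) θ).det
            else 0 := by
        have hsm : (fun cc => u (c : ℕ) * F t ⟨(c : ℕ) + 1, by omega⟩ (θ cc))
            = u (c : ℕ) • (fun cc => F t ⟨(c : ℕ) + 1, by omega⟩ (θ cc)) := rfl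
        rw [hsm, Matrix.det_updateRow_smul,
          upd_sub_row (F t) (ρf l m hm) θ c ⟨(c : ℕ) + 1, by omega⟩]
        by_cases h3 : (c : ℕ) + 1 = m
        · rw [if_pos h3, update_ρf_last hm c h3]
          congr 2
          omega
        · rw [if_neg h3]
          have hne : (⟨(c : ℕ) + 1, by omega⟩ : Fin m) ≠ c :=
            fin_mk_ne _ (by omega) c (by omega)
          have hzero : ((F t).submatrix
              (Function.update (ρf l m hm) c ⟨(c : ℕ) + 1, by omega⟩) θ).det = 0 := by
            apply Matrix.det_zero_of_row_eq hne
            funext k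
            show F t (Function.update (ρf l m hm) c _ _) (θ k)
              = F t (Function.update (ρf l m hm) c _ c) (θ k)
            rw [Function.update_self, Function.update_of_ne hne]
            rfl
          rw [hzero, mul_zero]
      rw [term1, term2, term3, zero_add]
    rw [Finset.sum_congr rfl (fun c _ => perrow c), Finset.sum_add_distrib, ← Finset.sum_mul]
    congr 1
    rw [Finset.sum_eq_single (⟨m - 1, by omega⟩ : Fin m)]
    · rw [if_pos (show (m - 1) + 1 = m by omega)]
    · intro k _ hk
      rw [if_neg]
      intro hc
      exact hk (Fin.ext (show (k : ℕ) = m - 1 by omega))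
    · simp
  rw [Heq] at H
  exact H

def embJ (k : ℕ) (r : Fin 2) : Fin (k+1) → Fin (k+2) :=
  fun i => if (i : ℕ) < k then ⟨i, by have := i.isLt; omega⟩
           else ⟨k + (r : ℕ), by have := r.isLt; omega⟩

def topk (k : ℕ) (N : Matrix (Fin (k+2)) (Fin (k+2)) ℝ) : Matrix (Fin k) (Fin k) ℝ :=
  N.submatrix (fun i => ⟨i, by have := i.isLt; omega⟩) (fun i => ⟨i, by have := i.isLt; omega⟩)

theorem jacobi_aux {k : ℕ} (N : Matrix (Fin (k+2)) (Fin (k+2)) ℝ)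
    (hA : IsUnit (topk k N).det) :
    (N.submatrix (embJ k 0) (embJ k 0)).det * (N.submatrix (embJ k 1) (embJ k 1)).det
      - (N.submatrix (embJ k 0) (embJ k 1)).det * (N.submatrix (embJ k 1) (embJ k 0)).det
      = N.det * (topk k N).det := by
  set A := topk k N with hA'
  haveI : Invertible A := A.invertibleOfIsUnitDet hA
  set B : Matrix (Fin k) (Fin 2) ℝ :=
    fun i s2 => N ⟨i, by have := i.isLt; omega⟩ ⟨k + (s2 : ℕ), by have := s2.isLt; omega⟩ with hB
  set C : Matrix (Fin 2) (Fin k) ℝ :=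
    fun r i => N ⟨k + (r : ℕ), by have := r.isLt; omega⟩ ⟨i, by have := i.isLt; omega⟩ with hC
  set Dm : Matrix (Fin 2) (Fin 2) ℝ :=
    fun r s2 => N ⟨k + (r : ℕ), by have := r.isLt; omega⟩
      ⟨k + (s2 : ℕ), by have := s2.isLt; omega⟩ with hDm
  set S : Matrix (Fin 2) (Fin 2) ℝ := Dm - C * ⅟A * B with hS
  have hNdet : N.det = A.det * S.det := by
    have e : (N.submatrix (finSumFinEquiv (m := k) (n := 2)) finSumFinEquiv)
        = fromBlocks A B C Dm := by
      ext i j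
      rcases i with i | i <;> rcases j with j | j <;> rfl
    calc N.det = (N.submatrix (finSumFinEquiv (m := k) (n := 2)) finSumFinEquiv).det :=
          (Matrix.det_submatrix_equiv_self _ _).symm
      _ = (fromBlocks A B C Dm).det := by rw [e]
      _ = A.det * S.det := Matrix.det_fromBlocks₁₁ _ _ _ _
  have hminor : ∀ r s2 : Fin 2,
      (N.submatrix (embJ k r) (embJ k s2)).det = A.det * S r s2 := by
    intro r s2
    have e : ((N.submatrix (embJ k r) (embJ k s2)).submatrix
          (finSumFinEquiv (m := k) (n := 1)) (finSumFinEquiv (m := k) (n := 1)))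
        = fromBlocks A (Matrix.of fun i (_ : Fin 1) => B i s2)
            (Matrix.of fun (_ : Fin 1) jj => C r jj)
            (Matrix.of fun _ _ => Dm r s2) := by
      ext i j
      have hemb : ∀ (rr : Fin 2) (x : Fin k ⊕ Fin 1),
          embJ k rr (finSumFinEquiv (m := k) (n := 1) x)
            = Sum.elim (fun i : Fin k => (⟨i, by have := i.isLt; omega⟩ : Fin (k+2)))
                (fun _ => (⟨k + (rr : ℕ), by have := rr.isLt; omega⟩ : Fin (k+2))) x := by
        intro rr x
        rcases x with x | x
        · show embJ k rr (Fin.castAdd 1 x) = _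
          rw [embJ]
          simp only [Sum.elim_inl]
          rw [if_pos (show ((Fin.castAdd 1 x : Fin (k+1)) : ℕ) < k from x.isLt)]
          exact Fin.ext rfl
        · show embJ k rr (Fin.natAdd k x) = _
          rw [embJ]
          simp only [Sum.elim_inr]
          rw [if_neg (show ¬((Fin.natAdd k x : Fin (k+1)) : ℕ) < k by simp)]
      rcases i with i | i <;> rcases j with j | j <;>
        simp only [Matrix.submatrix_apply, hemb, Sum.elim_inl, Sum.elim_inr] <;> (try rfl)
    have hdet1 : (N.submatrix (embJ k r) (embJ k s2)).det
        = (fromBlocks A (Matrix.of fun i (_ : Fin 1) => B i s2)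
            (Matrix.of fun (_ : Fin 1) jj => C r jj)
            (Matrix.of fun _ _ => Dm r s2)).det := by
      rw [← e, Matrix.det_submatrix_equiv_self]
    rw [hdet1, Matrix.det_fromBlocks₁₁]
    congr 1
    rw [Matrix.det_fin_one]
    have hentry : ((Matrix.of fun (_ : Fin 1) jj => C r jj) * ⅟A *
          (Matrix.of fun i (_ : Fin 1) => B i s2)) 0 0
        = (C * ⅟A * B) r s2 := by
      simp [Matrix.mul_apply]
    simp only [Matrix.sub_apply, hentry]
    rfl
  rw [hminor, hminor, hminor, hminor, hNdet, Matrix.det_fin_two S]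
  ring

theorem topk_add_smul_one {k : ℕ} (N : Matrix (Fin (k+2)) (Fin (k+2)) ℝ) (ε : ℝ) :
    topk k (N + ε • 1) = topk k N + ε • 1 := by
  ext i j
  simp only [topk, Matrix.submatrix_apply, Matrix.add_apply, Matrix.smul_apply,
    Matrix.one_apply, smul_eq_mul]
  congr 1
  by_cases h : i = j
  · subst h
    rw [if_pos rfl, if_pos rfl]
  · have h2 : (⟨(i : ℕ), by have := i.isLt; omega⟩ : Fin (k+2))
        ≠ ⟨(j : ℕ), by have := j.isLt; omega⟩ :=
      fun hh => h (Fin.ext (show (i : ℕ) = (j : ℕ) from congrArg (Fin.val : Fin (k+2) → ℕ) hh))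
    rw [if_neg h2, if_neg h]

theorem jacobi {k : ℕ} (N : Matrix (Fin (k+2)) (Fin (k+2)) ℝ) :
    (N.submatrix (embJ k 0) (embJ k 0)).det * (N.submatrix (embJ k 1) (embJ k 1)).det
      - (N.submatrix (embJ k 0) (embJ k 1)).det * (N.submatrix (embJ k 1) (embJ k 0)).det
      = N.det * (topk k N).det := by
  classical
  set G : Matrix (Fin (k+2)) (Fin (k+2)) ℝ → ℝ := fun M =>
    (M.submatrix (embJ k 0) (embJ k 0)).det * (M.submatrix (embJ k 1) (embJ k 1)).det
    - (M.submatrix (embJ k 0) (embJ k 1)).det * (M.submatrix (embJ k 1) (embJ k 0)).det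
    - M.det * (topk k M).det with hG
  have key : G N = 0 := by
    have hcont : Continuous fun ε : ℝ => G (N + ε • 1) := by
      have hmat : Continuous fun ε : ℝ => N + ε • (1 : Matrix (Fin (k+2)) (Fin (k+2)) ℝ) :=
        continuous_const.add (continuous_id.smul continuous_const)
      refine Continuous.sub (Continuous.sub ?_ ?_) ?_
      · exact ((hmat.matrix_submatrix _ _).matrix_det).mul
          ((hmat.matrix_submatrix _ _).matrix_det)
      · exact ((hmat.matrix_submatrix _ _).matrix_det).mul
          ((hmat.matrix_submatrix _ _).matrix_det)
      · exact (hmat.matrix_det).mul ((hmat.matrix_submatrix _ _).matrix_det)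
    -- the polynomial ε ↦ det (topk N + ε • 1)
    set A := topk k N with hA
    set p : Polynomial ℝ := (-A).charpoly with hp'
    have hp : p ≠ 0 := ((-A).charpoly_monic).ne_zero
    have heval : ∀ ε : ℝ, p.eval ε = (A + ε • 1).det := by
      intro ε
      have h1 : p.eval ε = (((Polynomial.evalRingHom ε).mapMatrix) (Matrix.charmatrix (-A))).det := by
        rw [hp', Matrix.charpoly, ← RingHom.map_det]
        rfl
      rw [h1]
      congr 1
      ext i j
      by_cases h : i = j
      · subst h
        simp [Matrix.charmatrix_apply_eq, Matrix.one_apply]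
        ring
      · simp [Matrix.charmatrix_apply_ne _ _ _ h, Matrix.one_apply_ne h]
    have hfin : {ε : ℝ | (A + ε • (1 : Matrix (Fin k) (Fin k) ℝ)).det = 0}.Finite := by
      have : {ε : ℝ | (A + ε • (1 : Matrix (Fin k) (Fin k) ℝ)).det = 0}
          ⊆ {x | p.IsRoot x} := by
        intro ε hε
        simp only [Set.mem_setOf_eq, Polynomial.IsRoot, heval ε]
        exact hε
      exact (Polynomial.finite_setOf_isRoot hp).subset this
    have hdense : Dense {ε : ℝ | (A + ε • (1 : Matrix (Fin k) (Fin k) ℝ)).det = 0}ᶜ :=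
      (hfin.countable).dense_compl ℝ
    have hzero : Set.EqOn (fun ε : ℝ => G (N + ε • 1)) (fun _ => 0)
        {ε : ℝ | (A + ε • (1 : Matrix (Fin k) (Fin k) ℝ)).det = 0}ᶜ := by
      intro ε hε
      simp only [Set.mem_compl_iff, Set.mem_setOf_eq] at hε
      have hunit : IsUnit (topk k (N + ε • 1)).det := by
        rw [topk_add_smul_one, ← hA]
        exact isUnit_iff_ne_zero.mpr hε
      have := jacobi_aux (N + ε • 1) hunit
      show G (N + ε • 1) = 0
      rw [hG]
      dsimp only
      rw [this]
      ring
    have heq : (fun ε : ℝ => G (N + ε • 1)) = fun _ => 0 :=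
      Continuous.ext_on hdense hcont continuous_const hzero
    have := congrFun heq 0
    simpa using this
  rw [hG] at key
  dsimp only at key
  linarith [key]


def aTot (l : ℕ) (a : Fin l → ℝ) : ℕ → ℝ := fun n => if h : n < l then a ⟨n, h⟩ else 0
def bTot (l : ℕ) (b : Fin l → ℝ) : ℕ → ℝ := fun n => if h : n < l then b ⟨n, h⟩ else 0
def dTot (l : ℕ) (b : Fin l → ℝ) : ℕ → ℝ :=
  fun n => bTot l b n - (if 1 ≤ n then bTot l b (n - 1) else 0)

theorem laxA_eq_tri (l : ℕ) (a b : Fin l → ℝ) :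
    laxA l a b = tri l (aTot l a) (dTot l b) (fun _ => 1) := by
  ext i j
  simp only [laxA, tri, Matrix.of_apply]
  by_cases hij : i = j
  · subst hij
    rw [if_neg (by omega : ¬(i : ℕ) = (i : ℕ) + 1),
      dif_neg (by omega : ¬(i : ℕ) = (i : ℕ) + 1), if_pos rfl,
      if_neg (by omega : ¬(i : ℕ) = (i : ℕ) + 1),
      if_neg (by omega : ¬(i : ℕ) = (i : ℕ) + 1), if_pos rfl, zero_add, zero_add,
      dTot, bTot]
    congr 1
    by_cases h1 : 1 ≤ (i : ℕ)
    · rw [dif_pos (show 0 < (i : ℕ) from h1), if_pos h1, bTot,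
        dif_pos (show (i : ℕ) - 1 < l by have := i.isLt; omega)]
    · rw [dif_neg (show ¬0 < (i : ℕ) by omega), if_neg h1]
  · have hvij : (i : ℕ) ≠ (j : ℕ) := fun h => hij (Fin.ext h)
    rw [if_neg hij, if_neg hvij, add_zero]
    by_cases h1 : (j : ℕ) = (i : ℕ) + 1
    · rw [if_pos h1, if_pos h1, if_neg (show ¬(i : ℕ) = (j : ℕ) + 1 by omega), add_zero]
    · rw [if_neg h1, if_neg h1, zero_add]
      by_cases h2 : (i : ℕ) = (j : ℕ) + 1
      · rw [dif_pos h2, if_pos h2, aTot,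
          dif_pos (show (j : ℕ) < l by have := i.isLt; omega)]
      · rw [dif_neg h2, if_neg h2]

theorem bilinear_aux (l : ℕ) (hl : 1 ≤ l) (a0 b0 : Fin l → ℝ) (j : Fin l) :
    True := trivial
/-- **Casian–Kodama, equation (1.12) (bilinear identity for the τ-functions)**: the
leading principal minors `D_j(t) = D_j(exp(t L⁰))` of the exponential of the
type-`A_l` Lax matrix satisfy
`D_j·D_j'' − (D_j')² = a_j⁰·D_{j+1}·D_{j−1}` for every `t ∈ ℝ` and `1 ≤ j ≤ l`. -/
theorem bilinear_identity_principal_minors (l : ℕ) (hl : 1 ≤ l) (a0 b0 : Fin l → ℝ)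
    (t : ℝ) (j : Fin l) :
    DfunA l a0 b0 ((j : ℕ) + 1) t * deriv (deriv (DfunA l a0 b0 ((j : ℕ) + 1))) t -
      (deriv (DfunA l a0 b0 ((j : ℕ) + 1)) t) ^ 2 =
      a0 j * DfunA l a0 b0 ((j : ℕ) + 2) t * DfunA l a0 b0 (j : ℕ) t := by
  classical
  have hm : (j : ℕ) + 1 ≤ l := j.isLt
  set k := (j : ℕ) with hk
  set m := k + 1 with hmdef
  have hm1 : 1 ≤ m := by omega
  set s' := aTot l a0 with hs'
  set d' := dTot l b0 with hd'
  set T := tri l s' d' (fun _ => 1) with hT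
  have hlax : laxA l a0 b0 = T := laxA_eq_tri l a0 b0
  set β := ∑ c : Fin m, d' (c : ℕ) with hβ
  set α := s' (m - 1) with hα'
  set Dt : ℝ → ℝ :=
    fun tt => ((exp (tt • T)).submatrix (ρf l m hm) (ρf l m hm)).det with hDtdef
  set Ct : ℝ → ℝ :=
    fun tt => ((exp (tt • T)).submatrix (ρf l m hm) (γf l m hm)).det with hCtdef
  set Rt : ℝ → ℝ :=
    fun tt => ((exp (tt • T)).submatrix (γf l m hm) (ρf l m hm)).det with hRtdef
  set Xt : ℝ → ℝ :=
    fun tt => ((exp (tt • T)).submatrix (γf l m hm) (γf l m hm)).det with hXtdef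
  set c2 : Fin (k + 2) → Fin (l + 1) :=
    fun i => ⟨(i : ℕ), by have := i.isLt; omega⟩ with hc2
  set c0 : Fin k → Fin (l + 1) :=
    fun i => ⟨(i : ℕ), by have := i.isLt; omega⟩ with hc0
  set Dp : ℝ → ℝ := fun tt => ((exp (tt • T)).submatrix c2 c2).det with hDpdef
  set Dmm : ℝ → ℝ := fun tt => ((exp (tt • T)).submatrix c0 c0).det with hDmdef
  -- derivative facts
  have hD : ∀ tt, HasDerivAt Dt (β * Dt tt + α * Ct tt) tt := fun tt =>
    keyCol s' d' (fun _ => 1) hm hm1 (ρf l m hm) tt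
  have hDrow : ∀ tt, HasDerivAt Dt (β * Dt tt + 1 * Rt tt) tt := fun tt =>
    keyRow s' d' (fun _ => 1) hm hm1 (ρf l m hm) tt
  have hC : ∀ tt, HasDerivAt Ct (β * Ct tt + 1 * Xt tt) tt := fun tt =>
    keyRow s' d' (fun _ => 1) hm hm1 (γf l m hm) tt
  have hRC : ∀ tt, Rt tt = α * Ct tt := fun tt => by
    have h12 := (hD tt).unique (hDrow tt)
    linarith [h12]
  -- value of α
  have hαval : α = a0 j := by
    rw [hα', hs']
    have hmk : m - 1 = k := by omega
    rw [hmk, aTot, dif_pos (show k < l from j.isLt)]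
  -- bridges to DfunA
  have hbridge : DfunA l a0 b0 m = Dt := by
    funext tt
    rw [DfunA, pminor, dif_pos (show m ≤ l + 1 by omega), hlax]
    have hfun : (fun i : Fin m => Fin.castLE (show m ≤ l + 1 by omega) i)
        = ρf l m hm := funext fun i => Fin.ext rfl
    rw [hfun]
  have hbridgep : DfunA l a0 b0 (k + 2) = Dp := by
    funext tt
    rw [DfunA, pminor, dif_pos (show k + 2 ≤ l + 1 by omega), hlax]
    have hfun : (fun i : Fin (k + 2) => Fin.castLE (show k + 2 ≤ l + 1 by omega) i)
        = c2 := funext fun i => Fin.ext rfl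
    rw [hfun]
  have hbridgem : DfunA l a0 b0 k = Dmm := by
    funext tt
    rw [DfunA, pminor, dif_pos (show k ≤ l + 1 by omega), hlax]
    have hfun : (fun i : Fin k => Fin.castLE (show k ≤ l + 1 by omega) i)
        = c0 := funext fun i => Fin.ext rfl
    rw [hfun]
  -- Jacobi identity
  have hjac : ∀ tt, Dt tt * Xt tt - Ct tt * Rt tt = Dp tt * Dmm tt := by
    intro tt
    have hj := jacobi (k := k) ((exp (tt • T)).submatrix c2 c2)
    rw [Matrix.submatrix_submatrix, Matrix.submatrix_submatrix, Matrix.submatrix_submatrix,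
      Matrix.submatrix_submatrix] at hj
    rw [show topk k ((exp (tt • T)).submatrix c2 c2)
        = ((exp (tt • T)).submatrix c2 c2).submatrix
            (fun i : Fin k => (⟨(i : ℕ), by have := i.isLt; omega⟩ : Fin (k + 2)))
            (fun i : Fin k => (⟨(i : ℕ), by have := i.isLt; omega⟩ : Fin (k + 2)))
        from rfl, Matrix.submatrix_submatrix] at hj
    have e0 : c2 ∘ embJ k 0 = ρf l m hm := by
      funext i
      apply Fin.ext
      show ((embJ k 0 i : Fin (k + 2)) : ℕ) = (i : ℕ)
      rw [embJ]
      by_cases h : (i : ℕ) < k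
      · rw [if_pos h]
      · rw [if_neg h]
        have := i.isLt
        show k + 0 = (i : ℕ)
        omega
    have e1 : c2 ∘ embJ k 1 = γf l m hm := by
      funext i
      apply Fin.ext
      show ((embJ k 1 i : Fin (k + 2)) : ℕ) = ((γf l m hm i : Fin (l + 1)) : ℕ)
      rw [embJ, γf]
      by_cases h : (i : ℕ) < k
      · rw [if_pos h, if_neg (by omega : ¬(i : ℕ) + 1 = m)]
      · have := i.isLt
        rw [if_neg h, if_pos (by omega : (i : ℕ) + 1 = m)]
        show k + 1 = m
        omega
    have e2 : (c2 ∘ fun i : Fin k => (⟨(i : ℕ), by have := i.isLt; omega⟩ : Fin (k + 2)))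
        = c0 := funext fun i => Fin.ext rfl
    rw [e0, e1, e2] at hj
    linarith [hj]
  -- compute derivatives in the goal
  have h1fun : deriv (DfunA l a0 b0 m) = fun tt => β * Dt tt + α * Ct tt := by
    rw [hbridge]
    exact funext fun tt => (hD tt).deriv
  have h2val : deriv (fun tt => β * Dt tt + α * Ct tt) t
      = β * (β * Dt t + α * Ct t) + α * (β * Ct t + 1 * Xt t) :=
    (((hD t).const_mul β).add ((hC t).const_mul α)).deriv
  rw [h1fun, h2val, hbridge, hbridgep, hbridgem, ← hαval]
  have hjact := hjac t
  have hRCt := hRC t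
  linear_combination α * hjact + α * Ct t * hRCt
end

section
/- Let l ≥ 1, let a_1,…,a_l be nonzero real numbers, and let τ_1,…,τ_l : ℝ → ℝ be real-analytic functions, none identically zero on any neighborhood of 0, satisfying τ_j·τ_j″ − (τ_j′)² = a_j·τ_{j+1}·τ_{j−1} for all 1 ≤ j ≤ l, with the conventions τ_0 ≡ 1 and τ_{l+1} ≡ 1. Suppose 0 ≤ i, 1 ≤ s, i+s ≤ l, and that τ_j(0) = 0 exactly for j ∈ {i+1,…,i+s}. Then for each 1 ≤ k ≤ s, the order of vanishing of τ_{i+k} at 0 equals k(s+1−k). -/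
open Filter Topology

/-- `f` vanishes to order exactly `n` at `0`. -/
def OrdAt (f : ℝ → ℝ) (n : ℕ) : Prop :=
  ∃ g : ℝ → ℝ, AnalyticAt ℝ g 0 ∧ g 0 ≠ 0 ∧ ∀ᶠ x in 𝓝 (0:ℝ), f x = x ^ n * g x

lemma ordAt_analyticAt {f : ℝ → ℝ} {n : ℕ} (h : OrdAt f n) : AnalyticAt ℝ f 0 := by
  obtain ⟨g, hg, hg0, hfg⟩ := h
  exact (((analyticAt_id).pow n).mul hg).congr (EventuallyEq.symm hfg)

lemma ordAt_iff_order {f : ℝ → ℝ} {n : ℕ} (hf : AnalyticAt ℝ f 0) :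
    OrdAt f n ↔ analyticOrderAt f 0 = n := by
  rw [hf.analyticOrderAt_eq_natCast]
  simp only [OrdAt, sub_zero, smul_eq_mul]

lemma ordAt_unique {f : ℝ → ℝ} {n m : ℕ} (h1 : OrdAt f n) (h2 : OrdAt f m) : n = m := by
  have hf := ordAt_analyticAt h1
  have e1 := (ordAt_iff_order hf).1 h1
  have e2 := (ordAt_iff_order hf).1 h2
  exact_mod_cast e1.symm.trans e2

lemma ordAt_not_eventually_zero {f : ℝ → ℝ} {n : ℕ} (h : OrdAt f n) :
    ¬ ∀ᶠ x in 𝓝 (0:ℝ), f x = 0 := by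
  have hf := ordAt_analyticAt h
  rw [← analyticOrderAt_eq_top]
  rw [ordAt_iff_order hf] at h
  simp [h]

lemma ordAt_exists {f : ℝ → ℝ} (hf : AnalyticAt ℝ f 0)
    (h : ¬ ∀ᶠ x in 𝓝 (0:ℝ), f x = 0) : ∃ n, OrdAt f n := by
  have : analyticOrderAt f 0 ≠ ⊤ := fun ht => h (analyticOrderAt_eq_top.1 ht)
  lift analyticOrderAt f 0 to ℕ using this with n hn
  exact ⟨n, (ordAt_iff_order hf).2 hn.symm⟩

lemma ordAt_of_ne_zero {f : ℝ → ℝ} (hf : AnalyticAt ℝ f 0) (h : f 0 ≠ 0) : OrdAt f 0 :=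
  ⟨f, hf, h, Eventually.of_forall fun x => by simp⟩

lemma ordAt_pos {f : ℝ → ℝ} {n : ℕ} (h : OrdAt f n) (h0 : f 0 = 0) : 1 ≤ n := by
  obtain ⟨g, hg, hg0, hfg⟩ := h
  rcases Nat.eq_zero_or_pos n with hn | hn
  · exfalso; apply hg0
    have := hfg.self_of_nhds
    rw [h0, hn] at this
    simpa using this.symm
  · exact hn

lemma ordAt_const_mul_mul {c : ℝ} {f g : ℝ → ℝ} {n m : ℕ} (hc : c ≠ 0)
    (hf : OrdAt f n) (hg : OrdAt g m) :
    OrdAt (fun x => c * f x * g x) (n + m) := by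
  obtain ⟨u, hu, hu0, hfu⟩ := hf
  obtain ⟨v, hv, hv0, hgv⟩ := hg
  refine ⟨fun x => c * u x * v x, (analyticAt_const.mul hu).mul hv,
    mul_ne_zero (mul_ne_zero hc hu0) hv0, ?_⟩
  filter_upwards [hfu, hgv] with x e1 e2
  rw [e1, e2, pow_add]; ring

lemma ordAt_iteratedDeriv {f : ℝ → ℝ} {n : ℕ} (hf : AnalyticAt ℝ f 0) (h : OrdAt f n) :
    (∀ m, m < n → iteratedDeriv m f 0 = 0) ∧ iteratedDeriv n f 0 ≠ 0 := by
  obtain ⟨p, hp⟩ := hf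
  have hcoeff : ∀ m, iteratedDeriv m f 0 = (Nat.factorial m : ℝ) * p.coeff m := by
    intro m
    obtain ⟨r, hr⟩ := hp
    have hfs := hr.factorial_smul (1:ℝ) m
    rw [iteratedDeriv_eq_iteratedFDeriv, ← hfs, nsmul_eq_mul]
    rfl
  have hpne : p ≠ 0 := fun h0 => ordAt_not_eventually_zero h (hp.locally_zero_iff.mpr h0)
  have hord : OrdAt f p.order :=
    ⟨_, ⟨_, hp.has_fpower_series_iterate_dslope_fslope p.order⟩,
      hp.iterate_dslope_fslope_ne_zero hpne, by
        simpa only [sub_zero, smul_eq_mul] using Eventually.of_forall hp.eq_pow_order_mul_iterate_dslope⟩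
  have hn : n = p.order := ordAt_unique h hord
  constructor
  · intro m hm
    rw [hcoeff m]
    have : p m = 0 := p.apply_eq_zero_of_lt_order (by omega)
    simp [FormalMultilinearSeries.coeff_eq_zero.2 this]
  · rw [hcoeff n]
    refine mul_ne_zero (by exact_mod_cast Nat.factorial_ne_zero n) ?_
    rw [hn, Ne, FormalMultilinearSeries.coeff_eq_zero]
    exact p.apply_order_ne_zero hpne

lemma ordAt_bilinear {f : ℝ → ℝ} {m : ℕ} (h : OrdAt f (m + 1)) :
    OrdAt (fun x => f x * deriv (deriv f) x - (deriv f x) ^ 2) (2 * m) := by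
  obtain ⟨g, hg, hg0, hfg⟩ := h
  obtain ⟨U, hUf, hUo, hU0⟩ := eventually_nhds_iff.mp (hg.eventually_analyticAt.and hfg)
  have hgU : AnalyticOnNhd ℝ g U := fun x hx => (hUf x hx).1
  have hg' : AnalyticOnNhd ℝ (deriv g) U := hgU.deriv
  have hg'' : AnalyticOnNhd ℝ (deriv (deriv g)) U := hg'.deriv
  have hdf : ∀ x ∈ U, deriv f x = ((m:ℝ)+1) * x ^ m * g x + x ^ (m+1) * deriv g x := by
    intro x hx
    have hfe : f =ᶠ[𝓝 x] fun y => y ^ (m+1) * g y :=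
      eventually_of_mem (hUo.mem_nhds hx) (fun y hy => (hUf y hy).2)
    rw [hfe.deriv_eq]
    have h1 := (hasDerivAt_pow (m+1) x).fun_mul ((hgU x hx).differentiableAt.hasDerivAt)
    simp only [Nat.add_sub_cancel] at h1
    rw [h1.deriv]; push_cast; ring
  have hddf : ∀ x ∈ U, deriv (deriv f) x =
      (((m:ℝ)+1) * ((m:ℝ) * x ^ (m-1)) * g x + ((m:ℝ)+1) * x ^ m * deriv g x)
      + (((m:ℝ)+1) * x ^ m * deriv g x + x ^ (m+1) * deriv (deriv g) x) := by
    intro x hx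
    have hfe : deriv f =ᶠ[𝓝 x] fun y => ((m:ℝ)+1) * y ^ m * g y + y ^ (m+1) * deriv g y :=
      eventually_of_mem (hUo.mem_nhds hx) (fun y hy => hdf y hy)
    rw [hfe.deriv_eq]
    have h1 := ((hasDerivAt_pow m x).const_mul ((m:ℝ)+1)).fun_mul
      ((hgU x hx).differentiableAt.hasDerivAt)
    have h2 := (hasDerivAt_pow (m+1) x).fun_mul ((hg' x hx).differentiableAt.hasDerivAt)
    simp only [Nat.add_sub_cancel] at h2
    have H : HasDerivAt (fun y => ((m:ℝ)+1) * y ^ m * g y + y ^ (m+1) * deriv g y)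
        ((((m:ℝ)+1) * ((m:ℝ) * x ^ (m-1)) * g x + ((m:ℝ)+1) * x ^ m * deriv g x)
          + (((m:ℝ)+1) * x ^ m * deriv g x + x ^ (m+1) * deriv (deriv g) x)) x := by
      have := h1.fun_add h2
      refine this.congr_deriv ?_
      push_cast; ring
    rw [H.deriv]
  refine ⟨fun x => -((m:ℝ)+1) * g x ^ 2 + x ^ 2 * (g x * deriv (deriv g) x - (deriv g x) ^ 2),
    ?_, ?_, ?_⟩
  · have h0 := hgU 0 hU0
    have h1 := hg' 0 hU0
    have h2 := hg'' 0 hU0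
    exact (analyticAt_const.mul (h0.pow 2)).add
      (((analyticAt_id.pow 2)).mul ((h0.mul h2).sub (h1.pow 2)))
  · show -((m:ℝ)+1) * g 0 ^ 2 + (0:ℝ) ^ 2 * (g 0 * deriv (deriv g) 0 - (deriv g 0) ^ 2) ≠ 0
    have : (-((m:ℝ)+1) * g 0 ^ 2 + (0:ℝ) ^ 2 * (g 0 * deriv (deriv g) 0 - (deriv g 0) ^ 2))
        = -((m:ℝ)+1) * g 0 ^ 2 := by ring
    rw [this]
    have hm1 : ((m:ℝ)+1) ≠ 0 := by positivity
    exact mul_ne_zero (neg_ne_zero.2 hm1) (pow_ne_zero _ hg0)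
  · filter_upwards [eventually_of_mem (hUo.mem_nhds hU0) fun y hy => hy] with x hx
    rw [hdf x hx, hddf x hx, (hUf x hx).2]
    cases m with
    | zero => norm_num; ring
    | succ q =>
      simp only [Nat.add_sub_cancel]
      push_cast; ring

lemma ordAt_of_eq_one {f : ℝ → ℝ} (hf : ∀ x, f x = 1) : OrdAt f 0 :=
  ⟨fun _ => 1, analyticAt_const, one_ne_zero, Eventually.of_forall fun x => by simp [hf x]⟩

/-- **Casian–Kodama, Lemma 3.1 (multiplicities at a Painlevé divisor)**: let
`τ_0 ≡ 1, τ_1, …, τ_l, τ_{l+1} ≡ 1` be real-analytic functions, none identically zero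
near `0`, satisfying the Toda bilinear equations
`τ_j·τ_j'' − (τ_j')² = a_j·τ_{j+1}·τ_{j−1}` with all `a_j ≠ 0`.  If `τ_j(0) = 0`
exactly for `j ∈ {i+1,…,i+s}` (where `0 ≤ i`, `1 ≤ s`, `i+s ≤ l`), then for each
`1 ≤ k ≤ s` the order of vanishing of `τ_{i+k}` at `0` is exactly `k(s+1−k)`. -/
theorem tau_vanishing_order (l i s : ℕ) (hl : 1 ≤ l) (hs : 1 ≤ s) (his : i + s ≤ l)
    (a : ℕ → ℝ) (ha : ∀ j, 1 ≤ j → j ≤ l → a j ≠ 0)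
    (τ : ℕ → ℝ → ℝ)
    (hana : ∀ j, j ≤ l + 1 → ∀ x : ℝ, AnalyticAt ℝ (τ j) x)
    (hnz : ∀ j, 1 ≤ j → j ≤ l → ¬(∀ᶠ x in nhds (0 : ℝ), τ j x = 0))
    (hτ0 : ∀ x : ℝ, τ 0 x = 1) (hτtop : ∀ x : ℝ, τ (l + 1) x = 1)
    (hbil : ∀ j, 1 ≤ j → j ≤ l → ∀ x : ℝ,
      τ j x * deriv (deriv (τ j)) x - (deriv (τ j) x) ^ 2 = a j * τ (j + 1) x * τ (j - 1) x)
    (hzero : ∀ j, 1 ≤ j → j ≤ l → (τ j 0 = 0 ↔ (i + 1 ≤ j ∧ j ≤ i + s))) :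
    ∀ k, 1 ≤ k → k ≤ s →
      (∀ m, m < k * (s + 1 - k) → iteratedDeriv m (τ (i + k)) 0 = 0) ∧
      iteratedDeriv (k * (s + 1 - k)) (τ (i + k)) 0 ≠ 0 := by
  -- choose orders
  have hex : ∀ j, ∃ n, (j ≤ l + 1 → OrdAt (τ j) n) := by
    intro j
    by_cases hj : j ≤ l + 1
    · rcases Nat.eq_zero_or_pos j with h0 | h1
      · exact ⟨0, fun _ => h0 ▸ ordAt_of_eq_one hτ0⟩
      · rcases eq_or_lt_of_le hj with htop | hlt
        · exact ⟨0, fun _ => htop ▸ ordAt_of_eq_one hτtop⟩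
        · obtain ⟨n, hn⟩ := ordAt_exists (hana j hj 0) (hnz j h1 (by omega))
          exact ⟨n, fun _ => hn⟩
    · exact ⟨0, fun h => absurd h hj⟩
  choose N hN using hex
  -- boundary values
  have hNi : N i = 0 := by
    rcases Nat.eq_zero_or_pos i with h0 | h1
    · exact ordAt_unique (hN i (by omega)) (h0 ▸ ordAt_of_eq_one hτ0)
    · have hil : i ≤ l := by omega
      have hne : τ i 0 ≠ 0 := fun h => by
        have := (hzero i h1 hil).1 h; omega
      exact ordAt_unique (hN i (by omega)) (ordAt_of_ne_zero (hana i (by omega) 0) hne)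
  have hNtop : N (i + s + 1) = 0 := by
    by_cases hc : i + s = l
    · have : i + s + 1 = l + 1 := by omega
      exact ordAt_unique (hN (i+s+1) (by omega)) (this ▸ ordAt_of_eq_one hτtop)
    · have h1 : 1 ≤ i + s + 1 := by omega
      have h2 : i + s + 1 ≤ l := by omega
      have hne : τ (i+s+1) 0 ≠ 0 := fun h => by
        have := (hzero (i+s+1) h1 h2).1 h; omega
      exact ordAt_unique (hN (i+s+1) (by omega)) (ordAt_of_ne_zero (hana (i+s+1) (by omega) 0) hne)
  -- positivity of interior orders
  have hpos : ∀ k, 1 ≤ k → k ≤ s → 1 ≤ N (i + k) := by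
    intro k hk1 hks
    have hz : τ (i+k) 0 = 0 := (hzero (i+k) (by omega) (by omega)).2 ⟨by omega, by omega⟩
    exact ordAt_pos (hN (i+k) (by omega)) hz
  -- recurrence
  have hrec : ∀ k, 1 ≤ k → k ≤ s →
      2 * N (i + k) = N (i + k + 1) + N (i + k - 1) + 2 := by
    intro k hk1 hks
    set j := i + k with hj
    have hj1 : 1 ≤ j := by omega
    have hjl : j ≤ l := by omega
    obtain ⟨m, hm⟩ : ∃ m, N j = m + 1 := ⟨N j - 1, by have := hpos k hk1 hks; rw [← hj] at this; omega⟩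
    have hOj : OrdAt (τ j) (m + 1) := hm ▸ hN j (by omega)
    have hL := ordAt_bilinear hOj
    have hfun : (fun x => τ j x * deriv (deriv (τ j)) x - (deriv (τ j) x) ^ 2)
        = fun x => a j * τ (j+1) x * τ (j-1) x := funext (hbil j hj1 hjl)
    rw [hfun] at hL
    have hR : OrdAt (fun x => a j * τ (j+1) x * τ (j-1) x) (N (j+1) + N (j-1)) :=
      ordAt_const_mul_mul (ha j hj1 hjl) (hN (j+1) (by omega)) (hN (j-1) (by omega))
    have := ordAt_unique hL hR
    omega
  -- solve the recurrence over ℤ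
  set M : ℕ → ℤ := fun k => (N (i + k) : ℤ) with hM
  have hM0 : M 0 = 0 := by simp [hM, hNi]
  have hMs : M (s + 1) = 0 := by
    have : i + (s + 1) = i + s + 1 := by omega
    simp [hM, this, hNtop]
  have hMrec : ∀ k, 1 ≤ k → k ≤ s → M (k + 1) = 2 * M k - M (k - 1) - 2 := by
    intro k hk1 hks
    have h := hrec k hk1 hks
    have e1 : i + k + 1 = i + (k + 1) := by omega
    have e2 : i + k - 1 = i + (k - 1) := by omega
    rw [e1, e2] at h
    simp only [hM]
    omega
  have hform : ∀ k, k ≤ s + 1 → M k = (k : ℤ) * M 1 - (k : ℤ) * ((k : ℤ) - 1) := by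
    intro k
    induction k using Nat.strong_induction_on with
    | _ k ih =>
      intro hk
      match k with
      | 0 => simpa using hM0
      | 1 => push_cast; ring
      | (t+2) =>
        have h1 := ih (t+1) (by omega) (by omega)
        have h2 := ih t (by omega) (by omega)
        have h3 := hMrec (t+1) (by omega) (by omega)
        have e : t + 1 - 1 = t := by omega
        rw [e] at h3
        have e2 : t + 1 + 1 = t + 2 := by omega
        rw [e2] at h3
        rw [h3, h1, h2]; push_cast; ring
  have hM1 : M 1 = (s : ℤ) := by
    have h := hform (s+1) (le_refl _)
    rw [hMs] at h
    have hne : ((s:ℤ) + 1) ≠ 0 := by positivity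
    have : ((s:ℤ) + 1) * M 1 = ((s:ℤ) + 1) * (s:ℤ) := by push_cast at h ⊢; linarith
    exact mul_left_cancel₀ hne this
  have hval : ∀ k, 1 ≤ k → k ≤ s → N (i + k) = k * (s + 1 - k) := by
    intro k hk1 hks
    have h := hform k (by omega)
    rw [hM1] at h
    have hcast : ((k * (s + 1 - k) : ℕ) : ℤ) = (k : ℤ) * ((s : ℤ) + 1 - (k : ℤ)) := by
      push_cast [Nat.cast_sub (show k ≤ s + 1 by omega)]; ring
    have : (N (i + k) : ℤ) = ((k * (s + 1 - k) : ℕ) : ℤ) := by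
      rw [hcast]; simp only [hM] at h; rw [h]; ring
    exact_mod_cast this
  intro k hk1 hks
  have hOrd : OrdAt (τ (i + k)) (k * (s + 1 - k)) := hval k hk1 hks ▸ hN (i + k) (by omega)
  exact ordAt_iteratedDeriv (hana (i + k) (by omega) 0) hOrd
end

section
/- Let l ≥ 1 and 1 ≤ k ≤ l. For every t ∈ ℝ, interpreting t^m/m! as 0 when m < 0, the k×k Hankel determinant det[(t^{l−i−j}/(l−i−j)!)_{0≤i,j≤k−1}] equals (−1)^{k(k−1)/2} · (∏_{j=1}^{k} (k−j)!/(l−k+j)!) · t^{k(l−k+1)}. (This is the value τ_k(t,0,…,0) of the k-th τ-function of the nilpotent sl(l+1,ℝ) Toda lattice when all higher times vanish; in particular τ_k vanishes at t = 0 to order exactly k(l−k+1) and is nonzero for t ≠ 0.) -/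
open Equiv Finset Matrix

lemma sign_revPerm_aux : ∀ n : ℕ,
    Equiv.Perm.sign (Fin.revPerm : Equiv.Perm (Fin n)) = (-1) ^ (n * (n - 1) / 2)
  | 0 => by
    have h : (Fin.revPerm : Equiv.Perm (Fin 0)) = 1 := by ext i; exact i.elim0
    rw [h, _root_.map_one]; norm_num
  | (n + 1) => by
    have hd : (Fin.revPerm : Equiv.Perm (Fin (n + 1))) =
        Equiv.Perm.decomposeFin.symm (0, Fin.revPerm) * finRotate (n + 1) := by
      ext y
      induction y using Fin.lastCases with
      | last =>
        simp [Equiv.Perm.mul_apply, finRotate_last, Fin.rev_last]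
      | cast i =>
        simp only [Fin.revPerm_apply, Equiv.Perm.mul_apply, finRotate_succ_apply,
          Fin.coeSucc_eq_succ, Equiv.Perm.decomposeFin_symm_apply_succ, Equiv.swap_self,
          Equiv.refl_apply, Fin.rev_castSucc]
    have harith : n * (n - 1) / 2 + n = (n + 1) * (n + 1 - 1) / 2 := by
      rcases n with _ | m
      · simp
      · rw [Nat.succ_sub_one]
        calc (m + 1) * m / 2 + (m + 1) = ((m + 1) * m + (m + 1) * 2) / 2 :=
              (Nat.add_mul_div_right _ _ (by norm_num)).symm
          _ = (m + 2) * (m + 1) / 2 := by ring_nf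
    rw [hd, _root_.map_mul, Equiv.Perm.decomposeFin.symm_sign, if_pos rfl, one_mul,
      sign_revPerm_aux n, sign_finRotate, ← pow_add]
    simp only [Nat.add_sub_cancel] at harith ⊢
    rw [harith]

lemma detG2_aux (m k : ℕ) :
    (Matrix.of fun i j : Fin k =>
        if (i : ℕ) ≤ m + (j : ℕ) then (((m + (j : ℕ) - (i : ℕ)).factorial : ℝ))⁻¹ else 0).det =
      (∏ j ∈ Finset.range k, ((j.factorial : ℝ))) /
        (∏ j ∈ Finset.range k, (((m + j).factorial : ℝ))) := by
  set G2 : Matrix (Fin k) (Fin k) ℝ := Matrix.of fun i j : Fin k =>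
      if (i : ℕ) ≤ m + (j : ℕ) then (((m + (j : ℕ) - (i : ℕ)).factorial : ℝ))⁻¹ else 0 with hG2
  have h1 : (Matrix.of fun i j : Fin k => ((m + (j : ℕ)).factorial : ℝ) * G2 i j).det =
      (∏ j : Fin k, ((m + (j : ℕ)).factorial : ℝ)) * G2.det := Matrix.det_mul_row _ _
  have h2 : (Matrix.of fun i j : Fin k => ((m + (j : ℕ)).factorial : ℝ) * G2 i j) =
      Matrix.of fun i j : Fin k => (((m + (j : ℕ)).descFactorial (i : ℕ) : ℕ) : ℝ) := by
    ext i j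
    simp only [hG2, Matrix.of_apply]
    by_cases h : (i : ℕ) ≤ m + (j : ℕ)
    · have hc : (((m + (j : ℕ) - (i : ℕ)).factorial : ℕ) : ℝ) ≠ 0 :=
        Nat.cast_ne_zero.mpr (Nat.factorial_ne_zero _)
      rw [if_pos h, ← div_eq_mul_inv, div_eq_iff hc]
      have := Nat.factorial_mul_descFactorial h
      rw [mul_comm] at this
      exact_mod_cast this.symm
    · rw [if_neg h, Nat.descFactorial_eq_zero_iff_lt.mpr (by omega)]
      simp
  have h3 : (Matrix.of fun i j : Fin k => (((m + (j : ℕ)).descFactorial (i : ℕ) : ℕ) : ℝ)).det =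
      ∏ j ∈ Finset.range k, ((j.factorial : ℝ)) := by
    rw [← Matrix.det_transpose]
    have ht : (Matrix.of fun i j : Fin k => (((m + (j : ℕ)).descFactorial (i : ℕ) : ℕ) : ℝ))ᵀ =
        Matrix.of fun i j : Fin k =>
          (descPochhammer ℝ (j : ℕ)).eval (((m + (i : ℕ) : ℕ)) : ℝ) := by
      ext i j
      simp only [Matrix.transpose_apply, Matrix.of_apply,
        descPochhammer_eval_eq_descFactorial]
    rw [ht, ← Matrix.det_eval_matrixOfPolynomials_eq_det_vandermonde _ _
      (fun i => descPochhammer_natDegree ℝ (i : ℕ)) (fun i => monic_descPochhammer ℝ (i : ℕ))]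
    have hv : (fun i : Fin k => (((m + (i : ℕ) : ℕ)) : ℝ)) =
        fun i : Fin k => ((i : ℕ) : ℝ) + (m : ℝ) := by
      funext i; push_cast; ring
    rw [hv, Matrix.det_vandermonde_add]
    rcases k with _ | k''
    · simp
    · rw [Matrix.det_vandermonde_id_eq_superFactorial]
      rw [← Nat.prod_range_succ_factorial k'']
      push_cast
      rfl
  rw [eq_div_iff (Finset.prod_ne_zero_iff.mpr fun j _ =>
    Nat.cast_ne_zero.mpr (Nat.factorial_ne_zero _))]
  rw [← Fin.prod_univ_eq_prod_range (fun j => (((m + j).factorial : ℝ)))]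
  rw [mul_comm, ← h1, h2, h3]


/-- **Casian–Kodama, Section 1.2**: the value of the `k`-th τ-function of the nilpotent
`sl(l+1,ℝ)` Toda lattice at `(t,0,…,0)`: for `1 ≤ k ≤ l` and every `t ∈ ℝ`, the `k×k`
Hankel determinant `det[(t^{l-i-j}/(l-i-j)!)]` (entries with `l-i-j < 0` interpreted
as `0`) equals `(-1)^{k(k-1)/2}·(∏_{j=1}^{k} (k-j)!/(l-k+j)!)·t^{k(l-k+1)}`. -/
theorem hankel_det_tau_of_first_time (l k : ℕ) (hl : 1 ≤ l) (hk1 : 1 ≤ k) (hk2 : k ≤ l)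
    (t : ℝ) :
    Matrix.det (Matrix.of fun i j : Fin k =>
        if (i : ℕ) + (j : ℕ) ≤ l then
          t ^ (l - (i : ℕ) - (j : ℕ)) / (Nat.factorial (l - (i : ℕ) - (j : ℕ)) : ℝ)
        else 0) =
      (-1 : ℝ) ^ (k * (k - 1) / 2) *
        (∏ j ∈ Finset.range k,
          ((k - 1 - j).factorial : ℝ) / ((l - k + 1 + j).factorial : ℝ)) *
        t ^ (k * (l - k + 1)) := by
  set H : Matrix (Fin k) (Fin k) ℝ := Matrix.of fun i j : Fin k =>
      if (i : ℕ) + (j : ℕ) ≤ l then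
        t ^ (l - (i : ℕ) - (j : ℕ)) / (Nat.factorial (l - (i : ℕ) - (j : ℕ)) : ℝ) else 0 with hH
  set G : Matrix (Fin k) (Fin k) ℝ := Matrix.of fun i j : Fin k =>
      if (i : ℕ) + (j : ℕ) ≤ l then (((l - (i : ℕ) - (j : ℕ)).factorial : ℝ))⁻¹ else 0 with hGdef
  -- Step B + C : the value of `det G`
  have hGC : G.det = (-1 : ℝ) ^ (k * (k - 1) / 2) *
      ∏ j ∈ Finset.range k, ((k - 1 - j).factorial : ℝ) / ((l - k + 1 + j).factorial : ℝ) := by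
    have hperm : (G.submatrix id (Fin.revPerm : Equiv.Perm (Fin k))).det =
        Equiv.Perm.sign (Fin.revPerm : Equiv.Perm (Fin k)) * G.det :=
      Matrix.det_permute' _ _
    have hsub : G.submatrix id (Fin.revPerm : Equiv.Perm (Fin k)) =
        Matrix.of fun i j : Fin k =>
          if (i : ℕ) ≤ (l - k + 1) + (j : ℕ) then
            ((((l - k + 1) + (j : ℕ) - (i : ℕ)).factorial : ℝ))⁻¹ else 0 := by
      ext i j
      have hi := i.isLt; have hj := j.isLt
      simp only [Matrix.submatrix_apply, id_eq, Fin.revPerm_apply, hGdef, Matrix.of_apply,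
        Fin.val_rev]
      by_cases h : (i : ℕ) ≤ (l - k + 1) + (j : ℕ)
      · rw [if_pos (by omega), if_pos h,
          show l - (i : ℕ) - (k - ((j : ℕ) + 1)) = l - k + 1 + (j : ℕ) - (i : ℕ) from by omega]
      · rw [if_neg (by omega), if_neg h]
    have hs : ((Equiv.Perm.sign (Fin.revPerm : Equiv.Perm (Fin k)) : ℤ) : ℝ) =
        (-1 : ℝ) ^ (k * (k - 1) / 2) := by
      rw [sign_revPerm_aux k]
      push_cast
      norm_num
    have hss : (-1 : ℝ) ^ (k * (k - 1) / 2) * (-1 : ℝ) ^ (k * (k - 1) / 2) = 1 := by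
      rw [← pow_add]
      exact Even.neg_one_pow ⟨_, rfl⟩
    have hG2val := detG2_aux (l - k + 1) k
    rw [hsub, hG2val] at hperm
    have hprodeq : (∏ j ∈ Finset.range k, ((j.factorial : ℝ))) /
        (∏ j ∈ Finset.range k, (((l - k + 1 + j).factorial : ℝ))) =
        ∏ j ∈ Finset.range k, ((k - 1 - j).factorial : ℝ) / ((l - k + 1 + j).factorial : ℝ) := by
      rw [Finset.prod_div_distrib]
      congr 1
      exact (Finset.prod_range_reflect (fun x => ((x.factorial : ℝ))) k).symm
    calc G.det = ((-1 : ℝ) ^ (k * (k - 1) / 2) * (-1 : ℝ) ^ (k * (k - 1) / 2)) * G.det := by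
          rw [hss, one_mul]
      _ = (-1 : ℝ) ^ (k * (k - 1) / 2) *
          (((Equiv.Perm.sign (Fin.revPerm : Equiv.Perm (Fin k)) : ℤ) : ℝ) * G.det) := by
          rw [hs, mul_assoc]
      _ = (-1 : ℝ) ^ (k * (k - 1) / 2) *
          ∏ j ∈ Finset.range k, ((k - 1 - j).factorial : ℝ) / ((l - k + 1 + j).factorial : ℝ) := by
          rw [← hperm, hprodeq]
  rcases eq_or_ne t 0 with rfl | ht
  · have hdet : H.det = 0 := by
      apply Matrix.det_eq_zero_of_column_eq_zero ⟨0, hk1⟩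
      intro i
      have hi := i.isLt
      have h0 : ((⟨0, hk1⟩ : Fin k) : ℕ) = 0 := rfl
      simp only [hH, Matrix.of_apply]
      rw [if_pos (by omega : (i : ℕ) + ((⟨0, hk1⟩ : Fin k) : ℕ) ≤ l)]
      rw [zero_pow (by omega : l - (i : ℕ) - ((⟨0, hk1⟩ : Fin k) : ℕ) ≠ 0), zero_div]
    rw [hdet, zero_pow (by positivity : k * (l - k + 1) ≠ 0), mul_zero]
  · -- t ≠ 0
    have hA1 : (Matrix.of fun i j : Fin k => t ^ (i : ℕ) * (t ^ (j : ℕ) * H i j)).det =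
        (∏ i : Fin k, t ^ (i : ℕ)) * ((∏ i : Fin k, t ^ (i : ℕ)) * H.det) := by
      rw [show (Matrix.of fun i j : Fin k => t ^ (i : ℕ) * (t ^ (j : ℕ) * H i j)) =
          Matrix.of fun i j : Fin k =>
            t ^ (i : ℕ) * ((Matrix.of fun i j : Fin k => t ^ (j : ℕ) * H i j) i j) from rfl]
      rw [Matrix.det_mul_column, Matrix.det_mul_row]
    have hA2 : (Matrix.of fun i j : Fin k => t ^ (i : ℕ) * (t ^ (j : ℕ) * H i j)) =
        Matrix.of fun i j : Fin k => t ^ l * G i j := by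
      ext i j
      simp only [Matrix.of_apply, hH, hGdef]
      by_cases h : (i : ℕ) + (j : ℕ) ≤ l
      · rw [if_pos h, if_pos h, div_eq_mul_inv, ← mul_assoc, ← mul_assoc, ← pow_add, ← pow_add]
        congr 2
        omega
      · simp [if_neg h]
    have hA3 : (Matrix.of fun i j : Fin k => t ^ l * G i j).det = t ^ (l * k) * G.det := by
      rw [Matrix.det_mul_column, Finset.prod_const, Finset.card_univ, Fintype.card_fin,
        ← pow_mul]
    have hprod : (∏ i : Fin k, t ^ (i : ℕ)) = t ^ (∑ i : Fin k, (i : ℕ)) :=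
      Finset.prod_pow_eq_pow_sum _ _ _
    set S := ∑ i : Fin k, (i : ℕ) with hS
    have hsum2 : S + S + k * (l - k + 1) = l * k := by
      have h2S : (∑ i ∈ Finset.range k, i) * 2 = k * (k - 1) := Finset.sum_range_id_mul_two k
      have hSr : S = ∑ i ∈ Finset.range k, i := Fin.sum_univ_eq_sum_range (fun i => i) k
      have hmul : k * (k - 1) + k * (l - k + 1) = l * k := by
        rw [← Nat.mul_add, show (k - 1) + (l - k + 1) = l by omega, Nat.mul_comm]
      calc S + S + k * (l - k + 1) = (∑ i ∈ Finset.range k, i) * 2 + k * (l - k + 1) := by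
            rw [← hSr]; ring
        _ = k * (k - 1) + k * (l - k + 1) := by rw [h2S]
        _ = l * k := hmul
    have hkey : t ^ (S + S) * H.det = t ^ (S + S) * (t ^ (k * (l - k + 1)) * G.det) := by
      have := hA1
      rw [hA2, hA3, hprod] at this
      calc t ^ (S + S) * H.det = t ^ S * (t ^ S * H.det) := by rw [pow_add]; ring
        _ = t ^ (l * k) * G.det := this.symm
        _ = t ^ (S + S) * (t ^ (k * (l - k + 1)) * G.det) := by
            rw [← hsum2, pow_add]; ring
    have hHdet : H.det = t ^ (k * (l - k + 1)) * G.det :=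
      mul_left_cancel₀ (pow_ne_zero _ ht) hkey
    rw [hHdet, hGC]
    ring
end

section
/- Let l ≥ 1 and a_1,…,a_l, b_1,…,b_l ∈ ℝ. Let L ∈ M_{2l}(ℝ) be the tridiagonal Lax matrix of the Toda lattice of type C_l: all superdiagonal entries equal 1; the subdiagonal entries are (a_1, a_2, …, a_{l−1}, a_l, a_{l−1}, …, a_2, a_1); the diagonal entries are (β_1, β_2, …, β_l, −β_l, …, −β_2, −β_1), where β_1 := b_1 and β_i := b_i − b_{i−1} for 2 ≤ i ≤ l. Then for every t ∈ ℝ and every 1 ≤ k ≤ l, the leading principal minors of exp(tL) satisfy D_{2l−k}(exp(tL)) = D_k(exp(tL)). -/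
/-- `betaBC l b j = β_j`, with `β₁ = b₁` and `β_j = b_j − b_{j−1}` for `2 ≤ j ≤ l`
(here `b i = b_{i+1}`). -/
def betaBC (l : ℕ) (b : Fin l → ℝ) (j : ℕ) : ℝ :=
  (if h : 1 ≤ j ∧ j ≤ l then b ⟨j - 1, by omega⟩ else 0) -
    (if h : 2 ≤ j ∧ j ≤ l then b ⟨j - 2, by omega⟩ else 0)

/-- The tridiagonal Lax matrix of the Toda lattice of type `C_l` (a `2l × 2l`
matrix): superdiagonal entries `1`, subdiagonal entries
`(a₁, …, a_{l−1}, a_l, a_{l−1}, …, a₁)`, and diagonal entries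
`(β₁, …, β_l, −β_l, …, −β₁)`. -/
def laxC (l : ℕ) (a b : Fin l → ℝ) : Matrix (Fin (2 * l)) (Fin (2 * l)) ℝ :=
  Matrix.of fun i j =>
    if (j : ℕ) = (i : ℕ) + 1 then 1
    else if h : (i : ℕ) = (j : ℕ) + 1 then
      a ⟨min ((j : ℕ) + 1) (2 * l - 1 - (j : ℕ)) - 1, by have := i.isLt; omega⟩
    else if i = j then
      (if (i : ℕ) < l then betaBC l b ((i : ℕ) + 1) else -betaBC l b (2 * l - (i : ℕ)))
    else 0

namespace CKAux

open Matrix NormedSpace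

noncomputable def Jm (n : ℕ) : Matrix (Fin n) (Fin n) ℝ :=
  Matrix.of fun i j => if (i:ℕ) + (j:ℕ) + 1 = n then (-1:ℝ)^(i:ℕ) else 0

lemma Jm_mul {n : ℕ} (M : Matrix (Fin n) (Fin n) ℝ) (i j : Fin n) :
    (Jm n * M) i j = (-1:ℝ)^(i:ℕ) * M i.rev j := by
  rw [Matrix.mul_apply]
  rw [Finset.sum_eq_single i.rev]
  · simp [Jm, Fin.val_rev]
    intro h; omega
  · intro k _ hk
    simp only [Jm, Matrix.of_apply]
    rw [if_neg, zero_mul]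
    intro h
    apply hk
    apply Fin.ext
    rw [Fin.val_rev]
    omega
  · simp

lemma mul_Jm {n : ℕ} (M : Matrix (Fin n) (Fin n) ℝ) (i j : Fin n) :
    (M * Jm n) i j = M i j.rev * (-1:ℝ)^((j.rev:ℕ)) := by
  rw [Matrix.mul_apply]
  rw [Finset.sum_eq_single j.rev]
  · simp [Jm, Fin.val_rev]
    intro h; omega
  · intro k _ hk
    simp only [Jm, Matrix.of_apply]
    rw [if_neg, mul_zero]
    intro h
    apply hk
    apply Fin.ext
    rw [Fin.val_rev]
    omega
  · simp

lemma Jm_mul_Jm {n : ℕ} (hn : Even n) (hn1 : 1 ≤ n) : Jm n * Jm n = -1 := by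
  ext i j
  rw [Jm_mul]
  simp only [Jm, Matrix.of_apply, Fin.val_rev, Matrix.neg_apply, Matrix.one_apply]
  rcases eq_or_ne i j with rfl | hij
  · rw [if_pos (by omega), if_pos rfl]
    rw [← pow_add]
    obtain ⟨m, rfl⟩ := hn
    have h2 : (i:ℕ) + (m + m - (i + 1)) = 2*(m-1) + 1 := by omega
    rw [h2, pow_succ, pow_mul]
    simp
  · rw [if_neg, if_neg hij, mul_zero, neg_zero]
    have := i.isLt; have := j.isLt
    intro h
    exact hij (Fin.ext (by omega))

lemma sgn_succ (v : ℕ) : (-1:ℝ)^(v+1) = -(-1:ℝ)^v := by rw [pow_succ]; ring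

lemma sgn_pred (v : ℕ) (h : 1 ≤ v) : (-1:ℝ)^(v-1) = -(-1:ℝ)^v := by
  have h2 := sgn_succ (v-1)
  rw [Nat.sub_add_cancel h] at h2
  linarith

lemma key (l : ℕ) (hl : 1 ≤ l) (a b : Fin l → ℝ) (i j : Fin (2*l)) :
    (-1:ℝ)^(i:ℕ) * laxC l a b i.rev j = -(laxC l a b j.rev i * (-1:ℝ)^((j.rev:ℕ))) := by
  have hvi := i.isLt
  have hvj := j.isLt
  simp only [laxC, Matrix.of_apply, Fin.val_rev]
  by_cases h1 : (i:ℕ) + (j:ℕ) = 2*l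
  · rw [if_pos (show (j:ℕ) = 2*l - ((i:ℕ)+1) + 1 by omega),
        if_pos (show (i:ℕ) = 2*l - ((j:ℕ)+1) + 1 by omega)]
    rw [show 2*l - ((j:ℕ)+1) = (i:ℕ) - 1 by omega, sgn_pred _ (by omega)]
    ring
  by_cases h2 : (i:ℕ) + (j:ℕ) + 2 = 2*l
  · rw [if_neg (show ¬((j:ℕ) = 2*l - ((i:ℕ)+1) + 1) by omega),
        dif_pos (show 2*l - ((i:ℕ)+1) = (j:ℕ) + 1 by omega),
        if_neg (show ¬((i:ℕ) = 2*l - ((j:ℕ)+1) + 1) by omega),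
        dif_pos (show 2*l - ((j:ℕ)+1) = (i:ℕ) + 1 by omega)]
    have e0 : (⟨min ((j:ℕ) + 1) (2*l - 1 - (j:ℕ)) - 1, by omega⟩ : Fin l)
        = ⟨min ((i:ℕ) + 1) (2*l - 1 - (i:ℕ)) - 1, by omega⟩ := Fin.ext (by simp; omega)
    rw [e0, show (-1:ℝ)^(2*l - ((j:ℕ)+1)) = -(-1:ℝ)^(i:ℕ) by
          rw [show 2*l - ((j:ℕ)+1) = (i:ℕ) + 1 by omega, sgn_succ]]
    ring
  by_cases h3 : (i:ℕ) + (j:ℕ) + 1 = 2*l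
  · rw [if_neg (show ¬((j:ℕ) = 2*l - ((i:ℕ)+1) + 1) by omega),
        dif_neg (show ¬(2*l - ((i:ℕ)+1) = (j:ℕ) + 1) by omega),
        if_pos (show i.rev = j from Fin.ext (by simp; omega)),
        if_neg (show ¬((i:ℕ) = 2*l - ((j:ℕ)+1) + 1) by omega),
        dif_neg (show ¬(2*l - ((j:ℕ)+1) = (i:ℕ) + 1) by omega),
        if_pos (show j.rev = i from Fin.ext (by simp; omega))]
    by_cases h4 : (i:ℕ) < l
    · rw [if_neg (show ¬(2*l - ((i:ℕ)+1) < l) by omega),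
          if_pos (show 2*l - ((j:ℕ)+1) < l by omega),
          show 2*l - (2*l - ((i:ℕ)+1)) = (i:ℕ) + 1 by omega,
          show 2*l - ((j:ℕ)+1) = (i:ℕ) by omega]
      ring
    · rw [if_pos (show 2*l - ((i:ℕ)+1) < l by omega),
          if_neg (show ¬(2*l - ((j:ℕ)+1) < l) by omega),
          show 2*l - ((i:ℕ)+1) + 1 = 2*l - (i:ℕ) by omega,
          show 2*l - (2*l - ((j:ℕ)+1)) = 2*l - (i:ℕ) by omega,
          show 2*l - ((j:ℕ)+1) = (i:ℕ) by omega]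
      ring
  · rw [if_neg (show ¬((j:ℕ) = 2*l - ((i:ℕ)+1) + 1) by omega),
        dif_neg (show ¬(2*l - ((i:ℕ)+1) = (j:ℕ) + 1) by omega),
        if_neg (show ¬(i.rev = j) by rw [Fin.ext_iff, Fin.val_rev]; omega),
        if_neg (show ¬((i:ℕ) = 2*l - ((j:ℕ)+1) + 1) by omega),
        dif_neg (show ¬(2*l - ((j:ℕ)+1) = (i:ℕ) + 1) by omega),
        if_neg (show ¬(j.rev = i) by rw [Fin.ext_iff, Fin.val_rev]; omega)]
    ring

lemma Jm_laxC (l : ℕ) (hl : 1 ≤ l) (a b : Fin l → ℝ) :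
    Jm (2*l) * laxC l a b = -((laxC l a b)ᵀ * Jm (2*l)) := by
  ext i j
  rw [Matrix.neg_apply, Jm_mul, mul_Jm, Matrix.transpose_apply]
  exact key l hl a b i j

lemma Jm_smul_laxC (l : ℕ) (hl : 1 ≤ l) (a b : Fin l → ℝ) (s : ℝ) :
    Jm (2*l) * (s • laxC l a b) = -((s • laxC l a b)ᵀ * Jm (2*l)) := by
  rw [Matrix.mul_smul, Jm_laxC l hl a b, Matrix.transpose_smul, Matrix.smul_mul]
  rw [smul_neg]

lemma exp_rel {n : ℕ} (hn : Even n) (hn1 : 1 ≤ n) (A : Matrix (Fin n) (Fin n) ℝ)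
    (hJA : Jm n * A = -(Aᵀ * Jm n)) :
    (NormedSpace.exp (-A))ᵀ = Jm n * NormedSpace.exp A * (-(Jm n)) := by
  have hJJ := Jm_mul_Jm hn hn1
  have hrinv : Jm n * (-(Jm n)) = 1 := by rw [mul_neg, hJJ]; simp
  have hlinv : (-(Jm n)) * Jm n = 1 := by rw [neg_mul, hJJ]; simp
  have hunit : IsUnit (Jm n) := ⟨⟨Jm n, -(Jm n), hrinv, hlinv⟩, rfl⟩
  have hinv : (Jm n)⁻¹ = -(Jm n) := Matrix.inv_eq_right_inv hrinv
  have hconj : Jm n * A * (Jm n)⁻¹ = -Aᵀ := by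
    rw [hinv, hJA, neg_mul_neg, Matrix.mul_assoc, hJJ]
    simp
  have h1 := Matrix.exp_conj (Jm n) A hunit
  rw [hconj, hinv] at h1
  rw [← h1, ← Matrix.transpose_neg, Matrix.exp_transpose]

lemma exp_mul_exp_neg {n : ℕ} (A : Matrix (Fin n) (Fin n) ℝ) :
    NormedSpace.exp A * NormedSpace.exp (-A) = 1 := by
  rw [← Matrix.exp_add_of_commute A (-A) (Commute.neg_right (Commute.refl A))]
  simp [NormedSpace.exp_zero]

lemma det_exp_eq_one (l : ℕ) (hl : 1 ≤ l) (a b : Fin l → ℝ) (t : ℝ) :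
    (NormedSpace.exp (t • laxC l a b)).det = 1 := by
  have hn : Even (2*l) := even_two_mul l
  have hn1 : 1 ≤ 2*l := by omega
  set L := laxC l a b with hL
  set f : ℝ → ℝ := fun s => (NormedSpace.exp (s • L)).det with hf
  have hcont : Continuous f := by
    apply Continuous.matrix_det
    letI : SeminormedRing (Matrix (Fin (2*l)) (Fin (2*l)) ℝ) := Matrix.linftyOpSemiNormedRing
    letI : NormedRing (Matrix (Fin (2*l)) (Fin (2*l)) ℝ) := Matrix.linftyOpNormedRing
    letI : NormedAlgebra ℝ (Matrix (Fin (2*l)) (Fin (2*l)) ℝ) := Matrix.linftyOpNormedAlgebra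
    letI : NormedAlgebra ℚ (Matrix (Fin (2*l)) (Fin (2*l)) ℝ) := NormedAlgebra.restrictScalars ℚ ℝ _
    exact NormedSpace.exp_continuous.comp (continuous_id.smul continuous_const)
  have hJJ := Jm_mul_Jm hn hn1
  have hdetJ : (Jm (2*l)).det * (-(Jm (2*l))).det = 1 := by
    rw [← Matrix.det_mul, mul_neg, hJJ, neg_neg, Matrix.det_one]
  have hsq : ∀ s : ℝ, f s * f s = 1 := by
    intro s
    have hrel := exp_rel hn hn1 (s • L) (Jm_smul_laxC l hl a b s)
    have hdh : (NormedSpace.exp (-(s • L))).det = f s := by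
      have h2 := congrArg Matrix.det hrel
      rw [Matrix.det_transpose, Matrix.det_mul, Matrix.det_mul] at h2
      rw [h2]
      show (Jm (2*l)).det * (f s) * (-(Jm (2*l))).det = f s
      have e3 : (Jm (2*l)).det * (f s) * (-(Jm (2*l))).det
          = ((Jm (2*l)).det * (-(Jm (2*l))).det) * f s := by ring
      rw [e3, hdetJ, one_mul]
    have hgh : f s * (NormedSpace.exp (-(s • L))).det = 1 := by
      rw [hf, ← Matrix.det_mul, exp_mul_exp_neg, Matrix.det_one]
    rw [hdh] at hgh
    exact hgh
  have hf0 : f 0 = 1 := by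
    rw [hf]; simp [NormedSpace.exp_zero]
  by_contra hne
  have hft : f t = -1 := by
    have h1 := hsq t
    have : (f t - 1) * (f t + 1) = 0 := by nlinarith
    rcases mul_eq_zero.mp this with h | h
    · exact absurd (by linarith : f t = 1) hne
    · linarith
  have hmem : (0:ℝ) ∈ Set.uIcc (f 0) (f t) := by
    rw [hf0, hft]
    rw [Set.mem_uIcc]
    right; constructor <;> norm_num
  obtain ⟨s, _, hs⟩ := intermediate_value_uIcc (hcont.continuousOn) hmem
  have := hsq s
  rw [hs] at this
  norm_num at this

lemma jacobi_aux (n k : ℕ) (hk : k ≤ n) (g h : Matrix (Fin n) (Fin n) ℝ)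
    (hgh : g * h = 1) :
    g.det * (h.submatrix (fun x : Fin k => (⟨n - k + (x:ℕ), by omega⟩ : Fin n))
      (fun x : Fin k => (⟨n - k + (x:ℕ), by omega⟩ : Fin n))).det
    = (g.submatrix (fun i : Fin (n-k) => Fin.castLE (by omega) i)
        (fun j : Fin (n-k) => Fin.castLE (by omega) j)).det := by
  classical
  set e : Fin (n-k) ⊕ Fin k ≃ Fin n := finSumFinEquiv.trans (finCongr (by omega)) with he
  set G := g.submatrix e e with hG
  set H := h.submatrix e e with hH
  have hGH : G * H = 1 := by
    rw [hG, hH, Matrix.submatrix_mul_equiv, hgh, Matrix.submatrix_one_equiv]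
  have hGb := Matrix.fromBlocks_toBlocks G
  have hHb := Matrix.fromBlocks_toBlocks H
  set A := G.toBlocks₁₁; set B := G.toBlocks₁₂; set C := G.toBlocks₂₁; set D := G.toBlocks₂₂
  set P := H.toBlocks₁₁; set Q := H.toBlocks₁₂; set R := H.toBlocks₂₁; set S := H.toBlocks₂₂
  have hmul : Matrix.fromBlocks (A*P + B*R) (A*Q + B*S) (C*P + D*R) (C*Q + D*S)
      = Matrix.fromBlocks 1 0 0 1 := by
    rw [← Matrix.fromBlocks_multiply, hGb, hHb, hGH, Matrix.fromBlocks_one]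
  have h12 : A*Q + B*S = 0 := by
    have := congrArg Matrix.toBlocks₁₂ hmul
    simp only [Matrix.toBlocks_fromBlocks₁₂] at this
    exact this
  have h22 : C*Q + D*S = 1 := by
    have := congrArg Matrix.toBlocks₂₂ hmul
    simp only [Matrix.toBlocks_fromBlocks₂₂] at this
    exact this
  have hGM : G * Matrix.fromBlocks 1 Q 0 S = Matrix.fromBlocks A 0 C 1 := by
    rw [← hGb, Matrix.fromBlocks_multiply]
    rw [h12, h22]
    congr 1 <;> simp
  have hdet : G.det * (Matrix.fromBlocks (1 : Matrix (Fin (n-k)) (Fin (n-k)) ℝ) Q 0 S).det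
      = A.det * 1 := by
    rw [← Matrix.det_mul, hGM, Matrix.det_fromBlocks_zero₁₂, Matrix.det_one]
  rw [Matrix.det_fromBlocks_zero₂₁, Matrix.det_one, one_mul] at hdet
  have hdG : G.det = g.det := Matrix.det_submatrix_equiv_self e g
  have hS : S = h.submatrix (fun x : Fin k => (⟨n - k + (x:ℕ), by omega⟩ : Fin n))
      (fun x : Fin k => (⟨n - k + (x:ℕ), by omega⟩ : Fin n)) := by
    ext x y
    simp only [S, Matrix.toBlocks₂₂, Matrix.of_apply, hH, Matrix.submatrix_apply]
    congr 1 <;> · apply Fin.ext; simp [he, finSumFinEquiv]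
  have hA : A = g.submatrix (fun i : Fin (n-k) => Fin.castLE (by omega : n-k ≤ n) i)
      (fun j : Fin (n-k) => Fin.castLE (by omega : n-k ≤ n) j) := by
    ext x y
    simp only [A, Matrix.toBlocks₁₁, Matrix.of_apply, hG, Matrix.submatrix_apply]
    congr 1 <;> · apply Fin.ext; simp [he, finSumFinEquiv]
  rw [← hS, ← hdG, hdet, hA, mul_one]

end CKAux

/-- **Casian–Kodama, Proposition 6.1 (symmetry of the minors, type C)**: for the
type-`C_l` Lax matrix `L`, the leading principal minors of `exp(tL)` satisfy
`D_{2l−k} = D_k` for all `1 ≤ k ≤ l` and `t ∈ ℝ`. -/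
theorem principal_minors_symmetry_typeC (l : ℕ) (hl : 1 ≤ l) (a b : Fin l → ℝ)
    (t : ℝ) (k : ℕ) (hk1 : 1 ≤ k) (hk2 : k ≤ l) :
    pminor (NormedSpace.exp (t • laxC l a b)) (2 * l - k) =
      pminor (NormedSpace.exp (t • laxC l a b)) k := by
  classical
  have hn : Even (2*l) := even_two_mul l
  have hn1 : 1 ≤ 2*l := by omega
  have hk : k ≤ 2*l := by omega
  set L := laxC l a b with hL
  set g := NormedSpace.exp (t • L) with hg
  set h := NormedSpace.exp (-(t • L)) with hh
  have hgh : g * h = 1 := CKAux.exp_mul_exp_neg (t • L)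
  have hdet : g.det = 1 := CKAux.det_exp_eq_one l hl a b t
  have hrel := CKAux.exp_rel hn hn1 (t • L) (CKAux.Jm_smul_laxC l hl a b t)
  have hentry : ∀ x y : Fin (2*l), h x y =
      -(((-1:ℝ)^(y:ℕ) * g y.rev x.rev) * (-1:ℝ)^((x.rev:ℕ))) := by
    intro x y
    have e : h x y = (CKAux.Jm (2*l) * g * (-(CKAux.Jm (2*l)))) y x := by
      rw [hg, hh, ← hrel]; rfl
    rw [e, Matrix.mul_neg, Matrix.neg_apply, CKAux.mul_Jm, CKAux.Jm_mul]
  have htr : ∀ (p : ∀ x : Fin k, 2*l - k + (x:ℕ) < 2*l),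
      (h.submatrix (fun x : Fin k => (⟨2*l - k + (x:ℕ), p x⟩ : Fin (2*l)))
        (fun x : Fin k => (⟨2*l - k + (x:ℕ), p x⟩ : Fin (2*l)))).det
      = (g.submatrix (fun i : Fin k => Fin.castLE hk i)
          (fun j : Fin k => Fin.castLE hk j)).det := by
    intro p
    set Pm := g.submatrix (fun i : Fin k => Fin.castLE hk i)
      (fun j : Fin k => Fin.castLE hk j) with hPm
    set u : Fin k → ℝ := fun x => -(-1:ℝ)^(k - ((x:ℕ) + 1)) with hu
    set v : Fin k → ℝ := fun y => (-1:ℝ)^(2*l - k + (y:ℕ)) with hv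
    set W : Matrix (Fin k) (Fin k) ℝ := (Matrix.transpose Pm).submatrix Fin.rev Fin.rev with hW
    have hTrev : ∀ x : Fin k,
        (⟨2*l - k + (x:ℕ), p x⟩ : Fin (2*l)).rev = Fin.castLE hk x.rev := by
      intro x
      apply Fin.ext
      simp [Fin.val_rev]
      omega
    have h1 : h.submatrix (fun x : Fin k => (⟨2*l - k + (x:ℕ), p x⟩ : Fin (2*l)))
          (fun x : Fin k => (⟨2*l - k + (x:ℕ), p x⟩ : Fin (2*l)))
        = Matrix.of (fun x y => u x * Matrix.of (fun x y : Fin k => v y * W x y) x y) := by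
      ext x y
      simp only [Matrix.submatrix_apply, Matrix.of_apply, hu, hv, hW,
        Matrix.transpose_apply, hPm]
      rw [hentry, hTrev, hTrev]
      simp only [Fin.coe_castLE, Fin.val_rev]
      ring
    rw [h1, Matrix.det_mul_column, Matrix.det_mul_row]
    have hWdet : W.det = Pm.det := by
      have e2 : W = (Matrix.transpose Pm).submatrix ⇑(Fin.revPerm) ⇑(Fin.revPerm) := rfl
      rw [e2, Matrix.det_submatrix_equiv_self, Matrix.det_transpose]
    have hprod : (∏ x : Fin k, u x) * (∏ x : Fin k, v x) = 1 := by
      rw [← Finset.prod_mul_distrib]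
      apply Finset.prod_eq_one
      intro x _
      have hx := x.isLt
      simp only [hu, hv]
      rw [neg_mul, ← pow_add,
        show (k - ((x:ℕ) + 1)) + (2*l - k + (x:ℕ)) = 2*(l-1)+1 by omega,
        pow_succ, pow_mul]
      norm_num
    rw [hWdet, ← mul_assoc, hprod, one_mul]
  have hjac := CKAux.jacobi_aux (2*l) k hk g h hgh
  rw [hdet, one_mul] at hjac
  rw [htr (fun x : Fin k => by omega)] at hjac
  rw [pminor, pminor, dif_pos (show 2*l - k ≤ 2*l by omega), dif_pos hk]
  exact hjac.symm
end

section
/- Let l ≥ 2 and a_1,…,a_l, b_1,…,b_l ∈ ℝ. Let L ∈ M_{2l+1}(ℝ) be the tridiagonal Lax matrix of the Toda lattice of type B_l: all superdiagonal entries equal 1; the subdiagonal entries are (a_1, …, a_{l−1}, 2a_l, 2a_l, a_{l−1}, …, a_1); the diagonal entries are (β_1, …, β_{l−1}, 2b_l − b_{l−1}, 0, −(2b_l − b_{l−1}), −β_{l−1}, …, −β_1), where β_1 := b_1 and β_i := b_i − b_{i−1} for 2 ≤ i ≤ l−1. Then for every t ∈ ℝ and every 1 ≤ k ≤ l, the leading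 principal minors of exp(tL) satisfy D_{2l+1−k}(exp(tL)) = D_k(exp(tL)). -/
/-- The tridiagonal Lax matrix of the Toda lattice of type `B_l` (a
`(2l+1) × (2l+1)` matrix): superdiagonal entries `1`, subdiagonal entries
`(a₁, …, a_{l−1}, 2a_l, 2a_l, a_{l−1}, …, a₁)`, and diagonal entries
`(β₁, …, β_{l−1}, 2b_l − b_{l−1}, 0, −(2b_l − b_{l−1}), −β_{l−1}, …, −β₁)`. -/
def laxB (l : ℕ) (a b : Fin l → ℝ) : Matrix (Fin (2 * l + 1)) (Fin (2 * l + 1)) ℝ :=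
  Matrix.of fun i j =>
    if (j : ℕ) = (i : ℕ) + 1 then 1
    else if h : (i : ℕ) = (j : ℕ) + 1 then
      (if h2 : (j : ℕ) + 2 ≤ l then a ⟨(j : ℕ), by omega⟩
       else if h3 : (j : ℕ) ≤ l then 2 * a ⟨l - 1, by have := i.isLt; omega⟩
       else a ⟨2 * l - 1 - (j : ℕ), by have := i.isLt; omega⟩)
    else if i = j then
      (if (i : ℕ) + 2 ≤ l then betaBC l b ((i : ℕ) + 1)
       else if h4 : (i : ℕ) + 1 = l then
         2 * b ⟨l - 1, by omega⟩ - b ⟨l - 2, by omega⟩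
       else if (i : ℕ) = l then 0
       else if h5 : (i : ℕ) = l + 1 then
         -(2 * b ⟨l - 1, by have := i.isLt; omega⟩ - b ⟨l - 2, by have := i.isLt; omega⟩)
       else -betaBC l b (2 * l + 1 - (i : ℕ)))
    else 0


def subd (l : ℕ) (a : Fin l → ℝ) (j : ℕ) : ℝ :=
  if h2 : j + 2 ≤ l then a ⟨j, by omega⟩
  else if h3 : j ≤ l ∧ 1 ≤ l then 2 * a ⟨l - 1, by omega⟩
  else if h : l + 1 ≤ j ∧ j ≤ 2 * l - 1 then a ⟨2 * l - 1 - j, by omega⟩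
  else 0

def diagd (l : ℕ) (b : Fin l → ℝ) (i : ℕ) : ℝ :=
  if i + 2 ≤ l then betaBC l b (i + 1)
  else if h4 : i + 1 = l then 2 * b ⟨l - 1, by omega⟩ - b ⟨l - 2, by omega⟩
  else if i = l then 0
  else if h5 : i = l + 1 ∧ 1 ≤ l then -(2 * b ⟨l - 1, by omega⟩ - b ⟨l - 2, by omega⟩)
  else -betaBC l b (2 * l + 1 - i)

set_option maxHeartbeats 1000000 in
lemma laxB_eq (l : ℕ) (a b : Fin l → ℝ) (p q : Fin (2 * l + 1)) :
    laxB l a b p q =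
      if (q : ℕ) = (p : ℕ) + 1 then 1
      else if (p : ℕ) = (q : ℕ) + 1 then subd l a (q : ℕ)
      else if (p : ℕ) = (q : ℕ) then diagd l b (p : ℕ)
      else 0 := by
  have hp := p.isLt; have hq := q.isLt
  simp only [laxB, Matrix.of_apply, subd, diagd, Fin.ext_iff]
  split_ifs <;> first | rfl | omega


lemma subd_palin (l : ℕ) (hl : 2 ≤ l) (a : Fin l → ℝ) (j : ℕ) (hj : j ≤ 2 * l - 1) :
    subd l a (2 * l - 1 - j) = subd l a j := by
  simp only [subd]
  split_ifs <;> first | rfl | omega | (congr 1; simp only [Fin.mk.injEq]; omega)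

lemma diagd_neg (l : ℕ) (hl : 2 ≤ l) (b : Fin l → ℝ) (i : ℕ) (hi : i ≤ 2 * l) :
    diagd l b (2 * l - i) = -diagd l b i := by
  simp only [diagd]
  split_ifs <;>
    first
      | omega
      | (simp only [neg_neg, neg_zero, neg_inj] <;> first | rfl | (congr 1; omega))

lemma laxB_rev (l : ℕ) (hl : 2 ≤ l) (a b : Fin l → ℝ) (i j : Fin (2 * l + 1)) :
    ((-1:ℝ)) ^ ((i:ℕ) + (j:ℕ)) * laxB l a b i.rev j.rev = -laxB l a b j i := by
  have hi := i.isLt; have hj := j.isLt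
  have hsign : ∀ m : ℕ, m % 2 = 1 → ((-1:ℝ)) ^ m = -1 := fun m hm =>
    Odd.neg_one_pow (Nat.odd_iff.mpr hm)
  have hsign2 : ∀ m : ℕ, m % 2 = 0 → ((-1:ℝ)) ^ m = 1 := fun m hm =>
    Even.neg_one_pow (Nat.even_iff.mpr hm)
  simp only [laxB_eq, Fin.val_rev]
  split_ifs <;>
    first
    | omega
    | (rw [hsign _ (by omega)]; ring1)
    | (rw [hsign2 _ (by omega)]; ring1)
    | (rw [show 2 * l + 1 - ((j:ℕ) + 1) = 2 * l - 1 - (i:ℕ) from by omega,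
        subd_palin l hl a _ (by omega), hsign _ (by omega)]; ring1)
    | (rw [show 2 * l + 1 - ((i:ℕ) + 1) = 2 * l - (j:ℕ) from by omega,
        diagd_neg l hl b _ (by omega), hsign2 _ (by omega)]; ring1)
    | (simp only [mul_zero, neg_zero])


lemma neg_one_pow_mod (m n : ℕ) (h : m % 2 = n % 2) : ((-1:ℝ))^m = (-1)^n := by
  rcases Nat.even_or_odd m with he | ho
  · have hn : Even n := Nat.even_iff.mpr (by have := Nat.even_iff.mp he; omega)
    rw [he.neg_one_pow, hn.neg_one_pow]
  · have hn : Odd n := Nat.odd_iff.mpr (by have := Nat.odd_iff.mp ho; omega)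
    rw [ho.neg_one_pow, hn.neg_one_pow]

noncomputable def revS (l : ℕ) : Matrix (Fin (2*l+1)) (Fin (2*l+1)) ℝ :=
  Matrix.of fun i j => if j = i.rev then ((-1:ℝ))^(i:ℕ) else 0

lemma revS_apply_rev (l : ℕ) (j : Fin (2*l+1)) : revS l j.rev j = ((-1:ℝ))^(j:ℕ) := by
  rw [show revS l j.rev j = ((-1:ℝ))^((j.rev : ℕ)) from by simp [revS, Fin.rev_rev]]
  exact neg_one_pow_mod _ _ (by have := j.isLt; rw [Fin.val_rev]; omega)

lemma revS_mul_apply (l : ℕ) (M : Matrix (Fin (2*l+1)) (Fin (2*l+1)) ℝ) (i j : Fin (2*l+1)) :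
    (revS l * M) i j = ((-1:ℝ))^(i:ℕ) * M i.rev j := by
  rw [Matrix.mul_apply, Finset.sum_eq_single i.rev]
  · simp [revS]
  · intro p _ hp; simp [revS, Ne.symm, hp]
  · intro h; exact absurd (Finset.mem_univ _) h

lemma mul_revS_apply (l : ℕ) (M : Matrix (Fin (2*l+1)) (Fin (2*l+1)) ℝ) (i j : Fin (2*l+1)) :
    (M * revS l) i j = ((-1:ℝ))^(j:ℕ) * M i j.rev := by
  rw [Matrix.mul_apply, Finset.sum_eq_single j.rev]
  · rw [revS_apply_rev]; ring
  · intro p _ hp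
    have : ¬ (j = p.rev) := by
      intro h; apply hp; rw [h, Fin.rev_rev]
    simp [revS, this]
  · intro h; exact absurd (Finset.mem_univ _) h

lemma revS_mul_revS (l : ℕ) : revS l * revS l = 1 := by
  ext i j
  rw [revS_mul_apply]
  by_cases h : j = i
  · subst h
    rw [revS_apply_rev, Matrix.one_apply_eq, ← pow_add]
    exact Even.neg_one_pow ⟨(j:ℕ), by ring⟩
  · have h2 : ¬ (j = i.rev.rev) := by rw [Fin.rev_rev]; exact h
    have h3 : (1 : Matrix (Fin (2*l+1)) (Fin (2*l+1)) ℝ) i j = 0 :=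
      Matrix.one_apply_ne (fun hh => h hh.symm)
    simp only [revS, Matrix.of_apply, if_neg h2, mul_zero, h3]

open Matrix in
lemma revS_conj (l : ℕ) (hl : 2 ≤ l) (a b : Fin l → ℝ) :
    revS l * laxB l a b * revS l = -(laxB l a b)ᵀ := by
  ext i j
  rw [mul_revS_apply, revS_mul_apply, Matrix.neg_apply, Matrix.transpose_apply,
    ← laxB_rev l hl a b i j, pow_add]
  ring

open Matrix in
lemma jacobi_s18 {p q : Type*} [Fintype p] [Fintype q] [DecidableEq p] [DecidableEq q]
    (M : Matrix (p ⊕ q) (p ⊕ q) ℝ) (hM : IsUnit M.det) :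
    M.det * (M⁻¹.toBlocks₂₂).det = (M.toBlocks₁₁).det := by
  have h : M * M⁻¹ = 1 := Matrix.mul_nonsing_inv M hM
  have h2 : fromBlocks M.toBlocks₁₁ M.toBlocks₁₂ M.toBlocks₂₁ M.toBlocks₂₂ *
      fromBlocks M⁻¹.toBlocks₁₁ M⁻¹.toBlocks₁₂ M⁻¹.toBlocks₂₁ M⁻¹.toBlocks₂₂ =
      fromBlocks 1 0 0 1 := by
    rw [fromBlocks_toBlocks, fromBlocks_toBlocks, fromBlocks_one]; exact h
  rw [fromBlocks_multiply, fromBlocks_inj] at h2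
  obtain ⟨-, e12, -, e22⟩ := h2
  have key : fromBlocks M.toBlocks₁₁ M.toBlocks₁₂ M.toBlocks₂₁ M.toBlocks₂₂ *
      fromBlocks 1 M⁻¹.toBlocks₁₂ 0 M⁻¹.toBlocks₂₂ =
      fromBlocks M.toBlocks₁₁ 0 M.toBlocks₂₁ 1 := by
    rw [fromBlocks_multiply, e12, e22]
    simp
  have hdet := congrArg Matrix.det key
  rwa [fromBlocks_toBlocks, det_mul, det_fromBlocks_zero₂₁, det_fromBlocks_zero₁₂,
    det_one, det_one, one_mul, mul_one] at hdet


/-- **Casian–Kodama, Proposition 6.2 (symmetry of the minors, type B)**: for the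
type-`B_l` Lax matrix `L`, the leading principal minors of `exp(tL)` satisfy
`D_{2l+1−k} = D_k` for all `1 ≤ k ≤ l` and `t ∈ ℝ`. -/
theorem principal_minors_symmetry_typeB (l : ℕ) (hl : 2 ≤ l) (a b : Fin l → ℝ)
    (t : ℝ) (k : ℕ) (hk1 : 1 ≤ k) (hk2 : k ≤ l) :
    pminor (NormedSpace.exp (t • laxB l a b)) (2 * l + 1 - k) =
      pminor (NormedSpace.exp (t • laxB l a b)) k := by
  set A := NormedSpace.exp (t • laxB l a b) with hAdef
  -- the conjugation identity
  let U : (Matrix (Fin (2*l+1)) (Fin (2*l+1)) ℝ)ˣ :=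
    ⟨revS l, revS l, revS_mul_revS l, revS_mul_revS l⟩
  have h1 : revS l * (t • laxB l a b) * revS l = Matrix.transpose (-(t • laxB l a b)) := by
    rw [Matrix.mul_smul, Matrix.smul_mul, revS_conj l hl a b]
    simp [Matrix.transpose_neg, Matrix.transpose_smul, smul_neg]
  have hSAS : revS l * A * revS l = Matrix.transpose A⁻¹ := by
    calc revS l * A * revS l = NormedSpace.exp (revS l * (t • laxB l a b) * revS l) :=
          (Matrix.exp_units_conj U _).symm
      _ = Matrix.transpose A⁻¹ := by rw [h1, Matrix.exp_transpose, Matrix.exp_neg]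
  have hInv : ∀ p q : Fin (2*l+1), A⁻¹ p q = ((-1:ℝ))^((q:ℕ)+(p:ℕ)) * A q.rev p.rev := by
    intro p q
    have h2 : Matrix.transpose A⁻¹ q p = (revS l * A * revS l) q p := by rw [hSAS]
    rw [Matrix.transpose_apply] at h2
    rw [h2, mul_revS_apply, revS_mul_apply, pow_add]
    ring
  -- determinant is 1
  have hAu : IsUnit A.det := (Matrix.isUnit_iff_isUnit_det A).mp (Matrix.isUnit_exp _)
  have hA : A * A⁻¹ = 1 := Matrix.mul_nonsing_inv A hAu
  have hdetAinv : A.det * A⁻¹.det = 1 := by rw [← Matrix.det_mul, hA, Matrix.det_one]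
  have hS2 : (revS l).det * (revS l).det = 1 := by
    rw [← Matrix.det_mul, revS_mul_revS, Matrix.det_one]
  have hAinvdet : A⁻¹.det = (revS l).det * A.det * (revS l).det := by
    have h3 : A⁻¹.det = (Matrix.transpose A⁻¹).det := (Matrix.det_transpose _).symm
    rw [h3, ← hSAS, Matrix.det_mul, Matrix.det_mul]
  rw [hAinvdet] at hdetAinv
  have hsq : A.det * A.det = 1 := by linear_combination hdetAinv - A.det * A.det * hS2
  have hB : A = NormedSpace.exp ((t/2) • laxB l a b) * NormedSpace.exp ((t/2) • laxB l a b) := by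
    have h5 := Matrix.exp_add_of_commute ((t/2) • laxB l a b) ((t/2) • laxB l a b)
      (Commute.refl _)
    rw [← add_smul, show t/2 + t/2 = t from by ring] at h5
    rw [hAdef, h5]
  have hpos : A.det = (NormedSpace.exp ((t/2) • laxB l a b)).det ^ 2 := by
    rw [hB, Matrix.det_mul, sq]
  have hdet1 : A.det = 1 := by
    nlinarith [hsq, hpos, sq_nonneg ((NormedSpace.exp ((t/2) • laxB l a b)).det)]
  -- block decomposition
  have hk' : k ≤ 2*l+1 := by omega
  have hm' : 2*l+1-k ≤ 2*l+1 := by omega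
  let e : Fin k ⊕ Fin (2*l+1-k) ≃ Fin (2*l+1) := finSumFinEquiv.trans (finCongr (by omega))
  have hvalL : ∀ i : Fin k, ((e (Sum.inl i)) : ℕ) = (i:ℕ) := by
    intro i; simp [e, finSumFinEquiv]
  have hval : ∀ i : Fin (2*l+1-k), ((e (Sum.inr i)) : ℕ) = k + (i:ℕ) := by
    intro i; simp [e, finSumFinEquiv]
  have h11 : (A.submatrix e e).toBlocks₁₁ =
      A.submatrix (fun i : Fin k => Fin.castLE hk' i) (fun j : Fin k => Fin.castLE hk' j) := by
    ext i j
    simp only [Matrix.toBlocks₁₁, Matrix.submatrix_apply, Matrix.of_apply]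
    congr 1 <;> (apply Fin.ext; simp [hvalL])
  have hrev : ∀ i : Fin (2*l+1-k), (e (Sum.inr i)).rev = Fin.castLE hm' i.rev := by
    intro i
    apply Fin.ext
    simp only [Fin.coe_castLE, Fin.val_rev, hval]
    omega
  set T := A.submatrix (fun i : Fin (2*l+1-k) => Fin.castLE hm' i)
      (fun j : Fin (2*l+1-k) => Fin.castLE hm' j) with hTdef
  set sgn : Fin (2*l+1-k) → ℝ := fun i => ((-1:ℝ))^(i:ℕ) with hsgndef
  have h22 : ((A.submatrix e e)⁻¹).toBlocks₂₂ =
      Matrix.diagonal sgn * Matrix.transpose (T.submatrix Fin.rev Fin.rev) * Matrix.diagonal sgn := by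
    ext i j
    rw [Matrix.inv_submatrix_equiv]
    simp only [Matrix.toBlocks₂₂, Matrix.of_apply, Matrix.submatrix_apply]
    rw [hInv, Matrix.mul_diagonal, Matrix.diagonal_mul, Matrix.transpose_apply,
      Matrix.submatrix_apply, hTdef, Matrix.submatrix_apply, hrev i, hrev j,
      neg_one_pow_mod ((e (Sum.inr j) : ℕ) + (e (Sum.inr i) : ℕ)) ((i:ℕ)+(j:ℕ))
        (by rw [hval, hval]; omega), pow_add, hsgndef]
    ring
  have hTrev : (T.submatrix Fin.rev Fin.rev).det = T.det := by
    rw [show T.submatrix Fin.rev Fin.rev = T.submatrix ⇑Fin.revPerm ⇑Fin.revPerm from rfl,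
      Matrix.det_submatrix_equiv_self]
  have hsgn2 : (Matrix.diagonal sgn).det * (Matrix.diagonal sgn).det = 1 := by
    rw [← Matrix.det_mul, Matrix.diagonal_mul_diagonal]
    have h4 : (fun i => sgn i * sgn i) = fun _ : Fin (2*l+1-k) => (1:ℝ) := funext fun i => by
      simp only [hsgndef, ← pow_add]; exact Even.neg_one_pow ⟨(i:ℕ), by ring⟩
    rw [h4, Matrix.diagonal_one, Matrix.det_one]
  have h22det : (((A.submatrix e e)⁻¹).toBlocks₂₂).det = T.det := by
    rw [h22, Matrix.det_mul, Matrix.det_mul, Matrix.det_transpose, hTrev]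
    linear_combination T.det * hsgn2
  have hMdet : (A.submatrix e e).det = 1 := by rw [Matrix.det_submatrix_equiv_self, hdet1]
  have hjac := jacobi_s18 (A.submatrix e e) (by rw [hMdet]; exact isUnit_one)
  rw [hMdet, one_mul, h22det, h11] at hjac
  rw [pminor, pminor, dif_pos hm', dif_pos hk']
  exact hjac
end
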